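/- arXiv:1812.02138 — 8 statements merged into one kernel-verified Lean document; each statement's English description precedes it below -/
import Mathlib

section
/- (Transportation formula.) Let H be a real Hilbert space, T : H ⇒ H a maximal monotone operator, and let z̃_ℓ, v_ℓ ∈ H, ε_ℓ ≥ 0, α_ℓ ≥ 0 for ℓ = 1,…,k satisfy v_ℓ ∈ T^{ε_ℓ}(z̃_ℓ) for each ℓ and Σ_{ℓ=1}^k α_ℓ = 1. Define z̃^a := Σ_{ℓ=1}^k α_ℓ z̃_ℓ, v^a := Σ_{ℓ=1}^k α_ℓ v_ℓ, and ε^a := Σ_{ℓ=1}^k α_ℓ (ε_ℓ + ⟪z̃_ℓ − z̃^a, v_ℓ − v^a⟫). Then ε^a ≥ 0 and v^a ∈ T^{ε^a}(z̃^a). -/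
open Filter Finset Topology
open scoped RealInnerProductSpace

/-- A set-valued operator `T : H ⇒ H` is monotone. -/
def IsMonotoneOp {H : Type*} [NormedAddCommGroup H] [InnerProductSpace ℝ H]
    (T : H → Set H) : Prop :=
  ∀ ⦃z z' v v' : H⦄, v ∈ T z → v' ∈ T z' → 0 ≤ ⟪z - z', v - v'⟫

/-- `T` is maximal monotone: it is monotone and its graph is not properly contained in the
graph of any other monotone operator. -/
def IsMaximalMonotoneOp {H : Type*} [NormedAddCommGroup H] [InnerProductSpace ℝ H]
    (T : H → Set H) : Prop :=
  IsMonotoneOp T ∧ ∀ S : H → Set H, IsMonotoneOp S → (∀ z, T z ⊆ S z) → ∀ z, S z ⊆ T z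

/-- The ε-enlargement `T^ε` of a set-valued operator `T`. -/
def enl {H : Type*} [NormedAddCommGroup H] [InnerProductSpace ℝ H]
    (T : H → Set H) (ε : ℝ) (z : H) : Set H :=
  {v | ∀ z' v', v' ∈ T z' → ⟪z - z', v - v'⟫ ≥ -ε}

/-!
Expanding `⟪z̃_ℓ - z', v_ℓ - v'⟫` around the weighted means `z̃^a`, `v^a`, the cross terms average
to zero, so the weighted average of these inner products is `⟪z̃^a - z', v^a - v'⟫` plus the
dispersion term `∑ α_ℓ ⟪z̃_ℓ - z̃^a, v_ℓ - v^a⟫`; averaging the enlargement inequalities gives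
`v^a ∈ T^{ε^a}(z̃^a)`. For maximal monotone `T`, a point of `T^ε(z)` with `ε ≤ 0` is monotonically
related to the whole graph, hence lies in it, and testing the enlargement inequality against that
point itself forces `ε ≥ 0`.
-/

section TransportationFormula

variable {H : Type*} [NormedAddCommGroup H] [InnerProductSpace ℝ H]

section WeightedMean

variable {ι : Type*} {s : Finset ι} {a : ι → ℝ}

theorem sum_smul_sub_weightedMean (hsum : ∑ i ∈ s, a i = 1) (z : ι → H) :
    ∑ i ∈ s, a i • (z i - ∑ j ∈ s, a j • z j) = 0 := by
  simp only [smul_sub, sum_sub_distrib, ← sum_smul, hsum, one_smul, sub_self]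

theorem sum_mul_inner_sub_sub_eq (hsum : ∑ i ∈ s, a i = 1) (z v : ι → H) (p q : H) :
    ∑ i ∈ s, a i * ⟪z i - p, v i - q⟫ =
      ⟪∑ i ∈ s, a i • z i - p, ∑ i ∈ s, a i • v i - q⟫ +
        ∑ i ∈ s, a i * ⟪z i - ∑ j ∈ s, a j • z j, v i - ∑ j ∈ s, a j • v j⟫ := by
  have hz := sum_smul_sub_weightedMean hsum z
  have hv := sum_smul_sub_weightedMean hsum v
  set za := ∑ j ∈ s, a j • z j
  set va := ∑ j ∈ s, a j • v j
  calc ∑ i ∈ s, a i * ⟪z i - p, v i - q⟫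
      = ∑ i ∈ s, (a i * ⟪z i - za, v i - va⟫ + ⟪a i • (z i - za), va - q⟫ +
          ⟪za - p, a i • (v i - va)⟫ + a i * ⟪za - p, va - q⟫) := by
        refine sum_congr rfl fun i _ => ?_
        rw [← sub_add_sub_cancel (z i) za p, ← sub_add_sub_cancel (v i) va q]
        simp only [inner_add_left, inner_add_right, real_inner_smul_left, real_inner_smul_right]
        ring
    _ = ∑ i ∈ s, a i * ⟪z i - za, v i - va⟫ + ⟪∑ i ∈ s, a i • (z i - za), va - q⟫ +
          ⟪za - p, ∑ i ∈ s, a i • (v i - va)⟫ + (∑ i ∈ s, a i) * ⟪za - p, va - q⟫ := by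
        simp only [sum_add_distrib, sum_inner, inner_sum, sum_mul]
    _ = ⟪za - p, va - q⟫ + ∑ i ∈ s, a i * ⟪z i - za, v i - va⟫ := by
        rw [hz, hv, hsum, inner_zero_left, inner_zero_right]
        ring

theorem mem_enl_weightedMean {T : H → Set H} (ha : ∀ i ∈ s, 0 ≤ a i)
    (hsum : ∑ i ∈ s, a i = 1) (z v : ι → H) (ε : ι → ℝ)
    (hin : ∀ i ∈ s, v i ∈ enl T (ε i) (z i)) :
    ∑ i ∈ s, a i • v i ∈
      enl T (∑ i ∈ s, a i * (ε i + ⟪z i - ∑ j ∈ s, a j • z j, v i - ∑ j ∈ s, a j • v j⟫))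
        (∑ i ∈ s, a i • z i) := by
  intro z' v' hv'
  have hle : ∑ i ∈ s, a i * -ε i ≤ ∑ i ∈ s, a i * ⟪z i - z', v i - v'⟫ :=
    sum_le_sum fun i hi => mul_le_mul_of_nonneg_left (hin i hi z' v' hv') (ha i hi)
  rw [sum_mul_inner_sub_sub_eq hsum z v z' v'] at hle
  simp only [mul_add, sum_add_distrib, mul_neg, sum_neg_distrib] at hle ⊢
  linarith

end WeightedMean

namespace IsMaximalMonotoneOp

variable {T : H → Set H} {z v : H} {ε : ℝ}

theorem mem_of_forall_inner_nonneg (hT : IsMaximalMonotoneOp T)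
    (h : ∀ z' v', v' ∈ T z' → 0 ≤ ⟪z - z', v - v'⟫) : v ∈ T z := by
  let S : H → Set H := fun w => T w ∪ {u | w = z ∧ u = v}
  have hS : IsMonotoneOp S := by
    rintro w w' u u' (hu | ⟨rfl, rfl⟩) (hu' | ⟨rfl, rfl⟩)
    · exact hT.1 hu hu'
    · have hwu := h w u hu
      rwa [← inner_neg_neg, neg_sub, neg_sub] at hwu
    · exact h w' u' hu'
    · simp
  exact hT.2 S hS (fun _ => Set.subset_union_left) z (Or.inr ⟨rfl, rfl⟩)

theorem mem_of_mem_enl_of_nonpos (hT : IsMaximalMonotoneOp T) (hε : ε ≤ 0)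
    (hv : v ∈ enl T ε z) : v ∈ T z :=
  hT.mem_of_forall_inner_nonneg fun z' v' hv' => by linarith [hv z' v' hv']

theorem nonneg_of_mem_enl (hT : IsMaximalMonotoneOp T) (hv : v ∈ enl T ε z) : 0 ≤ ε := by
  by_contra! hneg
  have hself := hv z v (hT.mem_of_mem_enl_of_nonpos hneg.le hv)
  rw [sub_self, sub_self, inner_zero_left] at hself
  linarith

end IsMaximalMonotoneOp

end TransportationFormula

theorem stmt1_general
    {H : Type*} [NormedAddCommGroup H] [InnerProductSpace ℝ H]
    (T : H → Set H) (hT : IsMaximalMonotoneOp T)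
    (k : ℕ)
    (ztil v : ℕ → H) (ε a : ℕ → ℝ)
    (ha : ∀ ℓ ∈ Finset.Icc 1 k, 0 ≤ a ℓ)
    (hsum : ∑ ℓ ∈ Finset.Icc 1 k, a ℓ = 1)
    (hin : ∀ ℓ ∈ Finset.Icc 1 k, v ℓ ∈ enl T (ε ℓ) (ztil ℓ))
    (za va : H) (εa : ℝ)
    (hza : za = ∑ ℓ ∈ Finset.Icc 1 k, a ℓ • ztil ℓ)
    (hva : va = ∑ ℓ ∈ Finset.Icc 1 k, a ℓ • v ℓ)
    (hεa : εa = ∑ ℓ ∈ Finset.Icc 1 k, a ℓ * (ε ℓ + ⟪ztil ℓ - za, v ℓ - va⟫)) :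
    0 ≤ εa ∧ va ∈ enl T εa za := by
  subst hza hva hεa
  have hmem := mem_enl_weightedMean ha hsum ztil v ε hin
  exact ⟨hT.nonneg_of_mem_enl hmem, hmem⟩

/-- the transportation formula for ε-enlargements. -/
theorem stmt1
    {H : Type*} [NormedAddCommGroup H] [InnerProductSpace ℝ H] [CompleteSpace H]
    (T : H → Set H) (hT : IsMaximalMonotoneOp T)
    (k : ℕ) (hk : 1 ≤ k)
    (ztil v : ℕ → H) (ε a : ℕ → ℝ)
    (hε : ∀ ℓ ∈ Finset.Icc 1 k, 0 ≤ ε ℓ)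
    (ha : ∀ ℓ ∈ Finset.Icc 1 k, 0 ≤ a ℓ)
    (hsum : ∑ ℓ ∈ Finset.Icc 1 k, a ℓ = 1)
    (hin : ∀ ℓ ∈ Finset.Icc 1 k, v ℓ ∈ enl T (ε ℓ) (ztil ℓ))
    (za va : H) (εa : ℝ)
    (hza : za = ∑ ℓ ∈ Finset.Icc 1 k, a ℓ • ztil ℓ)
    (hva : va = ∑ ℓ ∈ Finset.Icc 1 k, a ℓ • v ℓ)
    (hεa : εa = ∑ ℓ ∈ Finset.Icc 1 k, a ℓ * (ε ℓ + ⟪ztil ℓ - za, v ℓ - va⟫)) :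
    0 ≤ εa ∧ va ∈ enl T εa za :=
  stmt1_general T hT k ztil v ε a ha hsum hin za va εa hza hva hεa
end

section
/- (Svaiter's lemma, part (a).) Let H be a real Hilbert space, T : H ⇒ H a maximal monotone operator, and let z̃, v, w ∈ H, λ > 0, ε ≥ 0, σ ∈ [0,1) satisfy v ∈ T^{ε}(z̃) and ‖λv + z̃ − w‖² + 2λε ≤ σ²‖z̃ − w‖². Let τ ∈ [0,1] and set z₊ := w − τλv. Then for every z ∈ H: ‖w − z‖² − ‖z₊ − z‖² ≥ (1−σ)²τ‖z̃ − w‖² + 2τλ(ε + ⟪z̃ − z, v⟫) + τ(1−τ)‖λv‖². -/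
/-!
With `u = λ v`, the left-hand side is `2τ⟪w - z, u⟫ - τ²‖u‖²`, so after cancelling the common
terms and dividing by `τ` the claim becomes `‖u‖² + 2⟪z̃ - w, u⟫ + 2λε + (1 - σ)²‖z̃ - w‖² ≤ 0`.
This is the error criterion with `‖u + z̃ - w‖²` expanded, weakened by `(1 - σ)² ≤ 1 - σ²`.
-/

open Filter Finset Topology
open scoped RealInnerProductSpace

lemma sq_one_sub_le_one_sub_sq {σ : ℝ} (hσ0 : 0 ≤ σ) (hσ1 : σ ≤ 1) :
    (1 - σ) ^ 2 ≤ 1 - σ ^ 2 := by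
  nlinarith

section RelaxedStep

variable {H : Type*} [NormedAddCommGroup H] [InnerProductSpace ℝ H]

lemma norm_sq_sub_norm_sub_smul_sq (b u : H) (τ : ℝ) :
    ‖b‖ ^ 2 - ‖b - τ • u‖ ^ 2 = 2 * τ * ⟪b, u⟫ - τ ^ 2 * ‖u‖ ^ 2 := by
  rw [norm_sub_sq_real, real_inner_smul_right, norm_smul, Real.norm_eq_abs, mul_pow, sq_abs]
  ring

lemma norm_sq_add_two_inner_le_of_norm_add_sq_le {a u : H} {η σ : ℝ} (hσ0 : 0 ≤ σ) (hσ1 : σ ≤ 1)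
    (herr : ‖u + a‖ ^ 2 + 2 * η ≤ σ ^ 2 * ‖a‖ ^ 2) :
    ‖u‖ ^ 2 + 2 * ⟪a, u⟫ + 2 * η + (1 - σ) ^ 2 * ‖a‖ ^ 2 ≤ 0 := by
  rw [norm_add_sq_real, real_inner_comm] at herr
  nlinarith [mul_le_mul_of_nonneg_right (sq_one_sub_le_one_sub_sq hσ0 hσ1) (sq_nonneg ‖a‖)]

lemma relaxed_step_gain {a b u : H} {η σ τ : ℝ} (hσ0 : 0 ≤ σ) (hσ1 : σ ≤ 1) (hτ0 : 0 ≤ τ)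
    (herr : ‖u + a‖ ^ 2 + 2 * η ≤ σ ^ 2 * ‖a‖ ^ 2) :
    ‖b‖ ^ 2 - ‖b - τ • u‖ ^ 2 ≥
      (1 - σ) ^ 2 * τ * ‖a‖ ^ 2 + 2 * τ * (η + ⟪a + b, u⟫) + τ * (1 - τ) * ‖u‖ ^ 2 := by
  rw [norm_sq_sub_norm_sub_smul_sq, inner_add_left]
  nlinarith [mul_nonpos_of_nonneg_of_nonpos hτ0 (norm_sq_add_two_inner_le_of_norm_add_sq_le hσ0 hσ1 herr)]

end RelaxedStep

theorem stmt2_general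
    {H : Type*} [NormedAddCommGroup H] [InnerProductSpace ℝ H]
    (ztil v w : H) (lam ε σ τ : ℝ)
    (hσ0 : 0 ≤ σ) (hσ1 : σ < 1)
    (hτ0 : 0 ≤ τ)
    (herr : ‖lam • v + ztil - w‖ ^ 2 + 2 * lam * ε ≤ σ ^ 2 * ‖ztil - w‖ ^ 2)
    (zp : H) (hzp : zp = w - (τ * lam) • v) :
    ∀ z : H,
      ‖w - z‖ ^ 2 - ‖zp - z‖ ^ 2 ≥
        (1 - σ) ^ 2 * τ * ‖ztil - w‖ ^ 2 + 2 * τ * lam * (ε + ⟪ztil - z, v⟫)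
          + τ * (1 - τ) * ‖lam • v‖ ^ 2 := by
  intro z
  rw [add_sub_assoc, mul_assoc] at herr
  have hstep : zp - z = (w - z) - τ • (lam • v) := by
    rw [hzp, smul_smul, sub_right_comm]
  have hgain := relaxed_step_gain (b := w - z) hσ0 hσ1.le hτ0 herr
  rw [sub_add_sub_cancel, inner_smul_right] at hgain
  rw [hstep]
  linarith

/-- Svaiter's lemma, part (a). -/
theorem stmt2
    {H : Type*} [NormedAddCommGroup H] [InnerProductSpace ℝ H] [CompleteSpace H]
    (T : H → Set H) (hT : IsMaximalMonotoneOp T)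
    (ztil v w : H) (lam ε σ τ : ℝ)
    (hlam : 0 < lam) (hε : 0 ≤ ε) (hσ0 : 0 ≤ σ) (hσ1 : σ < 1)
    (hτ0 : 0 ≤ τ) (hτ1 : τ ≤ 1)
    (hin : v ∈ enl T ε ztil)
    (herr : ‖lam • v + ztil - w‖ ^ 2 + 2 * lam * ε ≤ σ ^ 2 * ‖ztil - w‖ ^ 2)
    (zp : H) (hzp : zp = w - (τ * lam) • v) :
    ∀ z : H,
      ‖w - z‖ ^ 2 - ‖zp - z‖ ^ 2 ≥
        (1 - σ) ^ 2 * τ * ‖ztil - w‖ ^ 2 + 2 * τ * lam * (ε + ⟪ztil - z, v⟫)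
          + τ * (1 - τ) * ‖lam • v‖ ^ 2 :=
  stmt2_general ztil v w lam ε σ τ hσ0 hσ1 hτ0 herr zp hzp
end

section
/- Let {φ_k}_{k ≥ −1}, {s_k}_{k ≥ 1}, {α_k}_{k ≥ 0}, {δ_k}_{k ≥ 1} be sequences in [0,∞) and α ∈ ℝ such that φ₀ = φ_{−1}, 0 ≤ α_{k−1} ≤ α < 1 for all k ≥ 1, and φ_k − φ_{k−1} + s_k ≤ α_{k−1}(φ_{k−1} − φ_{k−2}) + δ_k for all k ≥ 1. Then for all k ≥ 1: φ_k + Σ_{j=1}^k s_j ≤ φ₀ + (1/(1−α)) Σ_{j=1}^k δ_j. -/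
open Filter Finset Topology

/-! With `θ k = max (φ k - φ (k - 1)) 0`, the recursion gives `θ (k + 1) ≤ α θ k + δ (k + 1)`.
Adding `α` times this to `1 - α` times the recursion itself shows that
`(1 - α) (φ k + ∑ s) + α θ k - ∑ δ` never increases; it starts at `(1 - α) φ 0` since `θ 0 = 0`. -/

lemma mul_le_mul_max_zero {a α : ℝ} (y : ℝ) (ha₀ : 0 ≤ a) (haα : a ≤ α) :
    a * y ≤ α * max y 0 :=
  calc a * y ≤ a * max y 0 := mul_le_mul_of_nonneg_left (le_max_left _ _) ha₀
    _ ≤ α * max y 0 := mul_le_mul_of_nonneg_right haα (le_max_right _ _)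

-- The paper's `φ_{-1} = φ_0` is encoded by truncated subtraction: `0 - 1 = 0`.
lemma inertial_descent_invariant {φ s a δ : ℕ → ℝ} {α : ℝ} (hs : ∀ k, 1 ≤ k → 0 ≤ s k) (hδ : ∀ k, 1 ≤ k → 0 ≤ δ k)
    (ha : ∀ k, 0 ≤ a k ∧ a k ≤ α) (hα : α < 1)
    (hrec : ∀ k, φ (k + 1) - φ k + s (k + 1) ≤ a k * (φ k - φ (k - 1)) + δ (k + 1)) (k : ℕ) :
    (1 - α) * (φ k + ∑ j ∈ Icc 1 k, s j) + α * max (φ k - φ (k - 1)) 0 ≤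
      (1 - α) * φ 0 + ∑ j ∈ Icc 1 k, δ j := by
  induction k with
  | zero => simp
  | succ k ih =>
    have hα₀ : 0 ≤ α := (ha 0).1.trans (ha 0).2
    set θ := max (φ k - φ (k - 1)) 0
    have hθ : 0 ≤ θ := le_max_right _ _
    have hstep : φ (k + 1) - φ k + s (k + 1) ≤ α * θ + δ (k + 1) := by
      linarith [hrec k, mul_le_mul_max_zero (φ k - φ (k - 1)) (ha k).1 (ha k).2]
    have hθ_succ : max (φ (k + 1) - φ k) 0 ≤ α * θ + δ (k + 1) :=
      max_le (by linarith [hs (k + 1) k.succ_pos])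
        (add_nonneg (mul_nonneg hα₀ hθ) (hδ (k + 1) k.succ_pos))
    rw [sum_Icc_succ_top k.succ_pos, sum_Icc_succ_top k.succ_pos, Nat.add_sub_cancel]
    linarith [mul_le_mul_of_nonneg_left hstep (sub_nonneg.2 hα.le),
      mul_le_mul_of_nonneg_left hθ_succ hα₀]

theorem stmt5_general (φ s αs δ : ℕ → ℝ) (α : ℝ)
    (hs : ∀ k, 1 ≤ k → 0 ≤ s k)
    (hδ : ∀ k, 1 ≤ k → 0 ≤ δ k)
    (hαs : ∀ k, 0 ≤ αs k ∧ αs k ≤ α)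
    (hα : α < 1)
    (hrec : ∀ k, 1 ≤ k →
      φ k - φ (k - 1) + s k ≤ αs (k - 1) * (φ (k - 1) - φ (k - 2)) + δ k) :
    ∀ k, 1 ≤ k →
      φ k + ∑ j ∈ Finset.Icc 1 k, s j ≤
        φ 0 + (1 / (1 - α)) * ∑ j ∈ Finset.Icc 1 k, δ j := by
  intro k _
  have hrec' : ∀ k, φ (k + 1) - φ k + s (k + 1) ≤ αs k * (φ k - φ (k - 1)) + δ (k + 1) :=
    fun k ↦ by simpa using hrec (k + 1) k.succ_pos
  have hinv := inertial_descent_invariant hs hδ hαs hα hrec' k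
  have hα₀ : 0 ≤ α := (hαs 0).1.trans (hαs 0).2
  have hθ : 0 ≤ α * max (φ k - φ (k - 1)) 0 := mul_nonneg hα₀ (le_max_right _ _)
  rw [one_div, ← sub_le_iff_le_add', inv_mul_eq_div, le_div_iff₀ (sub_pos.2 hα)]
  linarith

/-- Alvarez–Attouch auxiliary lemma, part (a).
Indexing convention: φ is indexed so that `φ k` is the paper's `φ_k` for `k ≥ 0`; the paper's
`φ_{−1}` equals `φ₀`, which is encoded by truncated subtraction (`k - 2 = 0` when `k = 1`). -/
theorem stmt5 (φ s αs δ : ℕ → ℝ) (α : ℝ)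
    (hφ : ∀ k, 0 ≤ φ k)
    (hs : ∀ k, 1 ≤ k → 0 ≤ s k)
    (hδ : ∀ k, 1 ≤ k → 0 ≤ δ k)
    (hαs : ∀ k, 0 ≤ αs k ∧ αs k ≤ α)
    (hα : α < 1)
    (hrec : ∀ k, 1 ≤ k →
      φ k - φ (k - 1) + s k ≤ αs (k - 1) * (φ (k - 1) - φ (k - 2)) + δ k) :
    ∀ k, 1 ≤ k →
      φ k + ∑ j ∈ Finset.Icc 1 k, s j ≤
        φ 0 + (1 / (1 - α)) * ∑ j ∈ Finset.Icc 1 k, δ j :=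
  stmt5_general φ s αs δ α hs hδ hαs hα hrec
end

section
/- Let {φ_k}_{k ≥ −1}, {s_k}_{k ≥ 1}, {α_k}_{k ≥ 0}, {δ_k}_{k ≥ 1} be sequences in [0,∞) and α ∈ ℝ such that φ₀ = φ_{−1}, 0 ≤ α_{k−1} ≤ α < 1 for all k ≥ 1, and φ_k − φ_{k−1} + s_k ≤ α_{k−1}(φ_{k−1} − φ_{k−2}) + δ_k for all k ≥ 1. If Σ_{k=1}^∞ δ_k < +∞, then the sequence {φ_k} converges to some element of [0,∞). -/
/-!
The positive parts `θ k = (φ (k + 1) - φ k)⁺` of the increments satisfy the contracting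
recursion `θ (k + 1) ≤ α θ k + δ (k + 2)`, so summing it and absorbing `α ∑ θ` on the left
bounds the partial sums of `θ` by `(α θ 0 + ∑ δ) / (1 - α)`. Then `φ n - ∑_{k<n} θ k` is
antitone and bounded below, hence convergent, and so is `φ`.
-/

open Filter Finset Topology

theorem summable_of_le_mul_add {θ δ : ℕ → ℝ} {α : ℝ} (hθ : ∀ k, 0 ≤ θ k) (hδ : ∀ k, 0 ≤ δ k)
    (hα₀ : 0 ≤ α) (hα : α < 1) (hrec : ∀ k, θ (k + 1) ≤ α * θ k + δ k) (hsum : Summable δ) :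
    Summable θ := by
  refine (summable_nat_add_iff 1).1 <|
    summable_of_sum_range_le (c := (α * θ 0 + ∑' k, δ k) / (1 - α)) (fun k => hθ _) fun n => ?_
  set S := ∑ k ∈ range n, θ (k + 1)
  have hshift : ∑ k ∈ range n, θ k ≤ θ 0 + S := by
    calc ∑ k ∈ range n, θ k ≤ ∑ k ∈ range (n + 1), θ k :=
          sum_le_sum_of_subset_of_nonneg (range_subset_range.2 n.le_succ) fun i _ _ => hθ i
      _ = θ 0 + S := by rw [sum_range_succ', add_comm]
  have hS : S ≤ α * ∑ k ∈ range n, θ k + ∑' k, δ k :=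
    calc S ≤ ∑ k ∈ range n, (α * θ k + δ k) := sum_le_sum fun k _ => hrec k
      _ = α * ∑ k ∈ range n, θ k + ∑ k ∈ range n, δ k := by rw [sum_add_distrib, mul_sum]
      _ ≤ α * ∑ k ∈ range n, θ k + ∑' k, δ k := by
          gcongr; exact hsum.sum_le_tsum _ fun k _ => hδ k
  rw [le_div_iff₀ (by linarith)]
  nlinarith [mul_le_mul_of_nonneg_left hshift hα₀]

theorem exists_tendsto_of_summable_posPart_sub {φ : ℕ → ℝ} (hφ : BddBelow (Set.range φ))
    (hsum : Summable fun k => (φ (k + 1) - φ k)⁺) : ∃ c, Tendsto φ atTop (𝓝 c) := by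
  set θ := fun k => (φ (k + 1) - φ k)⁺
  obtain ⟨m, hm⟩ := hφ
  set ψ := fun n => φ n - ∑ k ∈ range n, θ k
  have hψ_anti : Antitone ψ := antitone_nat_of_succ_le fun n => by
    simp only [ψ, sum_range_succ]
    linarith [le_posPart (φ (n + 1) - φ n)]
  have hψ_bdd : BddBelow (Set.range ψ) := by
    refine ⟨m - ∑' k, θ k, ?_⟩
    rintro _ ⟨n, rfl⟩
    linarith [hm ⟨n, rfl⟩, hsum.sum_le_tsum (range n) fun k _ => posPart_nonneg (φ (k + 1) - φ k)]
  have hφ_eq : φ = fun n => ψ n + ∑ k ∈ range n, θ k := by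
    funext n; simp only [ψ, sub_add_cancel]
  exact ⟨_, hφ_eq ▸ (tendsto_atTop_ciInf hψ_anti hψ_bdd).add hsum.hasSum.tendsto_sum_nat⟩

theorem posPart_le_mul_posPart_add {x y s a α d : ℝ} (ha₀ : 0 ≤ a) (ha : a ≤ α) (hs : 0 ≤ s)
    (hd : 0 ≤ d) (h : x + s ≤ a * y + d) : x⁺ ≤ α * y⁺ + d := by
  have hy : a * y ≤ α * y⁺ :=
    (mul_le_mul_of_nonneg_left (le_posPart y) ha₀).trans
      (mul_le_mul_of_nonneg_right ha (posPart_nonneg y))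
  rw [posPart_def]
  exact sup_le (by linarith) (by linarith [mul_nonneg (ha₀.trans ha) (posPart_nonneg y)])

/-- Indexing convention: `φ k` is the paper's `φ_k` for `k ≥ 0`; the paper's `φ_{−1}` equals `φ₀`,
which is encoded by truncated subtraction (`k - 2 = 0` when `k = 1`). -/
theorem stmt6 (φ s αs δ : ℕ → ℝ) (α : ℝ)
    (hφ : ∀ k, 0 ≤ φ k)
    (hs : ∀ k, 1 ≤ k → 0 ≤ s k)
    (hδ : ∀ k, 1 ≤ k → 0 ≤ δ k)
    (hαs : ∀ k, 0 ≤ αs k ∧ αs k ≤ α)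
    (hα : α < 1)
    (hrec : ∀ k, 1 ≤ k →
      φ k - φ (k - 1) + s k ≤ αs (k - 1) * (φ (k - 1) - φ (k - 2)) + δ k)
    (hsum : Summable δ) :
    ∃ c : ℝ, 0 ≤ c ∧ Tendsto φ atTop (𝓝 c) := by
  have hθrec : ∀ k, (φ (k + 2) - φ (k + 1))⁺ ≤ α * (φ (k + 1) - φ k)⁺ + δ (k + 2) := fun k =>
    posPart_le_mul_posPart_add (hαs _).1 (hαs _).2 (hs _ (by omega)) (hδ _ (by omega))
      (hrec (k + 2) (by omega))
  have hθsum : Summable fun k => (φ (k + 1) - φ k)⁺ :=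
    summable_of_le_mul_add (fun k => posPart_nonneg _) (fun k => hδ (k + 2) (by omega))
      ((hαs 0).1.trans (hαs 0).2) hα hθrec ((summable_nat_add_iff 2).2 hsum)
  obtain ⟨c, hc⟩ := exists_tendsto_of_summable_posPart_sub ⟨0, by rintro _ ⟨n, rfl⟩; exact hφ n⟩
    hθsum
  exact ⟨c, ge_of_tendsto' hc hφ, hc⟩
end

section
/- Let {z_k}, {w_k}, {z̃_k}, {v_k}, {ε_k}, {λ_k}, {α_k} be generated by Algorithm 1 (inertial under-relaxed HPE) for a maximal monotone operator T on a real Hilbert space H, with parameters α, σ ∈ [0,1), τ ∈ (0,1]. Define η := 2/((1+σ)τ) − 1 (which is > 0) and s_k := max{η‖z_k − w_{k−1}‖², (1−σ²)τ‖z̃_k − w_{k−1}‖²}. Then for every z* with 0 ∈ T(z*) and every k ≥ 1: ‖z_k − z*‖² + s_k ≤ ‖w_{k−1} − z*‖². -/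
open Filter Finset Topology
open scoped RealInnerProductSpace

/-!
Write `g := λ v` for the step and `a := z̃ − w` for the displacement of the extragradient point.
Since `0 ∈ T z*` and `v ∈ T^ε(z̃)`, we have `⟪z̃ − z*, g⟫ ≥ −λε`; combined with the relative error
criterion this gives the basic HPE inequality `‖g‖² + (1 − σ²)‖a‖² ≤ 2⟪w − z*, g⟫`, and the
criterion also yields `‖g‖ ≤ (1 + σ)‖a‖`, whence `‖g‖² ≤ (1 + σ)⟪w − z*, g⟫`. Expanding
`‖w − τg − z*‖²` and using `τ ≤ 1`, each of these two inequalities bounds one term of the maximum.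
-/

lemma sq_le_mul_of_sq_add_le {σ G A p : ℝ} (hσ0 : 0 ≤ σ) (hσ1 : σ ≤ 1) (hG : 0 ≤ G)
    (hGA : G ≤ (1 + σ) * A)
    (hkey : G ^ 2 + (1 - σ ^ 2) * A ^ 2 ≤ 2 * p) : G ^ 2 ≤ (1 + σ) * p := by
  have hsq : G ^ 2 ≤ ((1 + σ) * A) ^ 2 := pow_le_pow_left₀ hG hGA 2
  nlinarith [mul_le_mul_of_nonneg_left hsq (by linarith : (0 : ℝ) ≤ 1 - σ),
    mul_le_mul_of_nonneg_left hkey (by linarith : (0 : ℝ) ≤ 1 + σ)]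

lemma relaxation_gain_pos {σ τ : ℝ} (hσ0 : 0 ≤ σ) (hσ1 : σ < 1) (hτ0 : 0 < τ) (hτ1 : τ ≤ 1) :
    0 < 2 / ((1 + σ) * τ) - 1 := by
  rw [sub_pos, lt_div_iff₀ (by positivity)]
  nlinarith

lemma hpe_norm_le {E : Type*} [SeminormedAddCommGroup E] {σ δ : ℝ} {w z g : E}
    (hσ : 0 ≤ σ) (hδ : 0 ≤ δ)
    (herr : ‖g + z - w‖ ^ 2 + 2 * δ ≤ σ ^ 2 * ‖z - w‖ ^ 2) :
    ‖g‖ ≤ (1 + σ) * ‖z - w‖ := by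
  have herr_norm : ‖g + z - w‖ ≤ σ * ‖z - w‖ :=
    le_of_sq_le_sq (by rw [mul_pow]; linarith) (by positivity)
  calc ‖g‖ = ‖(g + z - w) - (z - w)‖ := by rw [sub_sub_sub_cancel_right, add_sub_cancel_right]
    _ ≤ ‖g + z - w‖ + ‖z - w‖ := norm_sub_le _ _
    _ ≤ (1 + σ) * ‖z - w‖ := by linarith

section InnerProduct

variable {H : Type*} [NormedAddCommGroup H] [InnerProductSpace ℝ H]

lemma neg_le_inner_of_mem_enl {T : H → Set H} {ε : ℝ} {z v zs : H}
    (hv : v ∈ enl T ε z) (hzs : (0 : H) ∈ T zs) : -ε ≤ ⟪z - zs, v⟫ := by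
  simpa using hv zs 0 hzs

lemma hpe_sq_norm_add_le_two_inner {σ δ : ℝ} {w z g zs : H}
    (hδ : -δ ≤ ⟪z - zs, g⟫) (herr : ‖g + z - w‖ ^ 2 + 2 * δ ≤ σ ^ 2 * ‖z - w‖ ^ 2) :
    ‖g‖ ^ 2 + (1 - σ ^ 2) * ‖z - w‖ ^ 2 ≤ 2 * ⟪w - zs, g⟫ := by
  have hsplit : ⟪w - zs, g⟫ = ⟪z - zs, g⟫ - ⟪z - w, g⟫ := by
    rw [← inner_sub_left, sub_sub_sub_cancel_left]
  have hexpand : ‖g + z - w‖ ^ 2 = ‖g‖ ^ 2 + 2 * ⟪z - w, g⟫ + ‖z - w‖ ^ 2 := by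
    rw [add_sub_assoc, norm_add_sq_real, real_inner_comm]
  linarith

lemma norm_sub_smul_sq_add_max_le {σ τ A : ℝ} {u g : H} (hσ0 : 0 ≤ σ) (hτ0 : 0 < τ) (hτ1 : τ ≤ 1)
    (hkey : ‖g‖ ^ 2 + (1 - σ ^ 2) * A ^ 2 ≤ 2 * ⟪u, g⟫) (hG : ‖g‖ ^ 2 ≤ (1 + σ) * ⟪u, g⟫) :
    ‖u - τ • g‖ ^ 2 + max ((2 / ((1 + σ) * τ) - 1) * ‖τ • g‖ ^ 2) ((1 - σ ^ 2) * τ * A ^ 2) ≤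
      ‖u‖ ^ 2 := by
  have hnorm : ‖τ • g‖ ^ 2 = τ ^ 2 * ‖g‖ ^ 2 := by
    rw [norm_smul, Real.norm_of_nonneg hτ0.le, mul_pow]
  have hexpand : ‖u - τ • g‖ ^ 2 = ‖u‖ ^ 2 - 2 * τ * ⟪u, g⟫ + τ ^ 2 * ‖g‖ ^ 2 := by
    rw [norm_sub_sq_real, real_inner_smul_right, hnorm]; ring
  have hfirst : (2 / ((1 + σ) * τ) - 1) * ‖τ • g‖ ^ 2 ≤ 2 * τ * ⟪u, g⟫ - τ ^ 2 * ‖g‖ ^ 2 := by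
    have hη : (2 / ((1 + σ) * τ) - 1) * ‖τ • g‖ ^ 2 =
        2 * τ / (1 + σ) * ‖g‖ ^ 2 - τ ^ 2 * ‖g‖ ^ 2 := by
      rw [hnorm]; field_simp
    have : 2 * τ / (1 + σ) * ‖g‖ ^ 2 ≤ 2 * τ * ⟪u, g⟫ := by
      rw [div_mul_eq_mul_div, div_le_iff₀ (by positivity)]
      nlinarith [mul_le_mul_of_nonneg_left hG (by positivity : (0 : ℝ) ≤ 2 * τ)]
    linarith
  have hsecond : (1 - σ ^ 2) * τ * A ^ 2 ≤ 2 * τ * ⟪u, g⟫ - τ ^ 2 * ‖g‖ ^ 2 := by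
    have hττ : τ ^ 2 * ‖g‖ ^ 2 ≤ τ * ‖g‖ ^ 2 := by
      gcongr; nlinarith
    nlinarith [mul_le_mul_of_nonneg_left hkey hτ0.le]
  linarith [max_le hfirst hsecond]

theorem hpe_relaxed_step_estimate {T : H → Set H} {σ τ lam ε : ℝ} {w z v zs : H}
    (hσ0 : 0 ≤ σ) (hσ1 : σ ≤ 1) (hτ0 : 0 < τ) (hτ1 : τ ≤ 1) (hlam : 0 ≤ lam) (hε : 0 ≤ ε)
    (hv : v ∈ enl T ε z)
    (herr : ‖lam • v + z - w‖ ^ 2 + 2 * lam * ε ≤ σ ^ 2 * ‖z - w‖ ^ 2)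
    (hzs : (0 : H) ∈ T zs) :
    ‖w - (τ * lam) • v - zs‖ ^ 2 +
        max ((2 / ((1 + σ) * τ) - 1) * ‖w - (τ * lam) • v - w‖ ^ 2)
          ((1 - σ ^ 2) * τ * ‖z - w‖ ^ 2) ≤
      ‖w - zs‖ ^ 2 := by
  have herr' : ‖lam • v + z - w‖ ^ 2 + 2 * (lam * ε) ≤ σ ^ 2 * ‖z - w‖ ^ 2 := by
    rwa [← mul_assoc]
  have hδ : -(lam * ε) ≤ ⟪z - zs, lam • v⟫ := by
    rw [real_inner_smul_right]
    nlinarith [neg_le_inner_of_mem_enl hv hzs]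
  have hkey := hpe_sq_norm_add_le_two_inner hδ herr'
  have hG := sq_le_mul_of_sq_add_le hσ0 hσ1 (norm_nonneg _)
    (hpe_norm_le hσ0 (by positivity) herr') hkey
  have hmain := norm_sub_smul_sq_add_max_le hσ0 hτ0 hτ1 hkey hG
  rwa [sub_right_comm, sub_sub_cancel_left, norm_neg, ← smul_smul]

end InnerProduct

theorem stmt7_general
    {H : Type*} [NormedAddCommGroup H] [InnerProductSpace ℝ H]
    (T : H → Set H)
    (σ τ : ℝ) (hσ0 : 0 ≤ σ) (hσ1 : σ < 1)
    (hτ0 : 0 < τ) (hτ1 : τ ≤ 1)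
    (z w ztil v : ℕ → H) (ε lam : ℕ → ℝ)
    (hlam : ∀ k, 1 ≤ k → 0 < lam k)
    (hεnn : ∀ k, 1 ≤ k → 0 ≤ ε k)
    (hin : ∀ k, 1 ≤ k → v k ∈ enl T (ε k) (ztil k))
    (herr : ∀ k, 1 ≤ k →
      ‖lam k • v k + ztil k - w (k - 1)‖ ^ 2 + 2 * lam k * ε k ≤
        σ ^ 2 * ‖ztil k - w (k - 1)‖ ^ 2)
    (hz : ∀ k, 1 ≤ k → z k = w (k - 1) - (τ * lam k) • v k) :
    0 < 2 / ((1 + σ) * τ) - 1 ∧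
    ∀ zs : H, (0 : H) ∈ T zs → ∀ k, 1 ≤ k →
      ‖z k - zs‖ ^ 2 +
        max ((2 / ((1 + σ) * τ) - 1) * ‖z k - w (k - 1)‖ ^ 2)
          ((1 - σ ^ 2) * τ * ‖ztil k - w (k - 1)‖ ^ 2) ≤
        ‖w (k - 1) - zs‖ ^ 2 := by
  refine ⟨relaxation_gain_pos hσ0 hσ1 hτ0 hτ1, fun zs hzs k hk => ?_⟩
  rw [hz k hk]
  exact hpe_relaxed_step_estimate hσ0 hσ1.le hτ0 hτ1 (hlam k hk).le (hεnn k hk) (hin k hk)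
    (herr k hk) hzs

/-- key estimate for Algorithm 1 (inertial under-relaxed HPE).
Indexing convention: `z k` is the paper's `z_k` for `k ≥ 0`, and the paper's `z_{−1} = z₀`
is encoded by truncated subtraction; `w k` is the paper's `w_k`. -/
theorem stmt7
    {H : Type*} [NormedAddCommGroup H] [InnerProductSpace ℝ H] [CompleteSpace H]
    (T : H → Set H) (hT : IsMaximalMonotoneOp T)
    (α σ τ : ℝ) (hα0 : 0 ≤ α) (hα1 : α < 1) (hσ0 : 0 ≤ σ) (hσ1 : σ < 1)
    (hτ0 : 0 < τ) (hτ1 : τ ≤ 1)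
    (z w ztil v : ℕ → H) (ε lam αs : ℕ → ℝ)
    (hαs : ∀ k, 0 ≤ αs k ∧ αs k ≤ α)
    (hw : ∀ k, w k = z k + αs k • (z k - z (k - 1)))
    (hlam : ∀ k, 1 ≤ k → 0 < lam k)
    (hεnn : ∀ k, 1 ≤ k → 0 ≤ ε k)
    (hin : ∀ k, 1 ≤ k → v k ∈ enl T (ε k) (ztil k))
    (herr : ∀ k, 1 ≤ k →
      ‖lam k • v k + ztil k - w (k - 1)‖ ^ 2 + 2 * lam k * ε k ≤
        σ ^ 2 * ‖ztil k - w (k - 1)‖ ^ 2)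
    (hz : ∀ k, 1 ≤ k → z k = w (k - 1) - (τ * lam k) • v k) :
    0 < 2 / ((1 + σ) * τ) - 1 ∧
    ∀ zs : H, (0 : H) ∈ T zs → ∀ k, 1 ≤ k →
      ‖z k - zs‖ ^ 2 +
        max ((2 / ((1 + σ) * τ) - 1) * ‖z k - w (k - 1)‖ ^ 2)
          ((1 - σ ^ 2) * τ * ‖ztil k - w (k - 1)‖ ^ 2) ≤
        ‖w (k - 1) - zs‖ ^ 2 :=
  stmt7_general T σ τ hσ0 hσ1 hτ0 hτ1 z w ztil v ε lam hlam hεnn hin herr hz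
end

section
/- Let {z_k}, {w_k}, {z̃_k}, {v_k}, {ε_k}, {λ_k}, {α_k} be generated by Algorithm 1 (inertial under-relaxed HPE) for a maximal monotone operator T on a real Hilbert space H, with parameters α, σ ∈ [0,1), τ ∈ (0,1]. Let z* satisfy 0 ∈ T(z*), define φ_k := ‖z_k − z*‖² for k ≥ −1, δ_k := α_{k−1}(1+α_{k−1})‖z_{k−1} − z_{k−2}‖² for k ≥ 1, η := 2/((1+σ)τ) − 1 and s_k := max{η‖z_k − w_{k−1}‖², (1−σ²)τ‖z̃_k − w_{k−1}‖²}. Then φ₀ = φ_{−1} and, for all k ≥ 1: φ_k − φ_{k−1} + s_k ≤ α_{k−1}(φ_{k−1} − φ_{k−2}) + δ_k. -/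
open Filter Finset Topology
open scoped RealInnerProductSpace

/-!
Testing the enlargement `v_k ∈ T^{ε_k}(z̃_k)` against the zero `(z*, 0)` gives
`⟪z̃_k − z*, v_k⟫ ≥ −ε_k`. Combined with the relative error criterion this shows that one
under-relaxed HPE step from `w_{k−1}` decreases the squared distance to `z*` by at least
`τ(1−τ)‖λ_k v_k‖² + τ(1−σ²)‖z̃_k − w_{k−1}‖²`, and the bound `‖λ_k v_k‖ ≤ (1+σ)‖z̃_k − w_{k−1}‖`
shows that this gain dominates both terms of `s_k`. Finally, `‖w_{k−1} − z*‖²` is expanded by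
the exact identity for the inertial extrapolation, which produces `α_{k−1}(φ_{k−1} − φ_{k−2})`
and `δ_k`.
-/

section HPEStep

variable {H : Type*} [NormedAddCommGroup H] [InnerProductSpace ℝ H]

theorem neg_le_inner_of_mem_enl_of_zero_mem {T : H → Set H} {ε : ℝ} {zt v zs : H}
    (hv : v ∈ enl T ε zt) (hzs : (0 : H) ∈ T zs) : -ε ≤ ⟪zt - zs, v⟫ := by
  simpa using hv zs 0 hzs

theorem norm_sq_sub_inertial (x y p : H) (a : ℝ) :
    ‖x + a • (x - y) - p‖ ^ 2 =
      ‖x - p‖ ^ 2 + a * (‖x - p‖ ^ 2 - ‖y - p‖ ^ 2) + a * (1 + a) * ‖x - y‖ ^ 2 := by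
  have hx : x + a • (x - y) - p = (x - p) + a • (x - y) := by abel
  have hy : y - p = (x - p) - (x - y) := by abel
  rw [hx, hy, norm_add_sq_real, norm_sub_sq_real (x - p), real_inner_smul_right, norm_smul,
    Real.norm_eq_abs, mul_pow, sq_abs]
  ring

variable {w zt v zs : H} {lam ε σ τ : ℝ}

theorem gain_le_norm_sq_decrease_of_hpe_error (hlam : 0 ≤ lam) (hτ : 0 ≤ τ)
    (herr : ‖lam • v + zt - w‖ ^ 2 + 2 * lam * ε ≤ σ ^ 2 * ‖zt - w‖ ^ 2)
    (hmono : -ε ≤ ⟪zt - zs, v⟫) :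
    τ * (1 - τ) * ‖lam • v‖ ^ 2 + τ * (1 - σ ^ 2) * ‖zt - w‖ ^ 2 ≤
      ‖w - zs‖ ^ 2 - ‖w - (τ * lam) • v - zs‖ ^ 2 := by
  set a := lam • v
  set d := zt - w with hd
  have hmono' : -(lam * ε) ≤ ⟪zt - zs, a⟫ := by
    rw [real_inner_smul_right]
    nlinarith
  have herr' : ‖a‖ ^ 2 + 2 * ⟪a, d⟫ + ‖d‖ ^ 2 + 2 * lam * ε ≤ σ ^ 2 * ‖d‖ ^ 2 := by
    rwa [add_sub_assoc, norm_add_sq_real] at herr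
  have hsplit : ⟪w - zs, a⟫ = ⟪zt - zs, a⟫ - ⟪a, d⟫ := by
    rw [real_inner_comm d a, ← inner_sub_left]
    congr 1
    rw [hd]
    abel
  have hstep : w - (τ * lam) • v - zs = (w - zs) - τ • a := by
    rw [mul_smul]
    abel
  have hgain : ‖a‖ ^ 2 + (1 - σ ^ 2) * ‖d‖ ^ 2 ≤ 2 * ⟪w - zs, a⟫ := by
    rw [hsplit]
    linarith
  rw [hstep, norm_sub_sq_real (w - zs), real_inner_smul_right, norm_smul τ a, Real.norm_eq_abs,
    mul_pow, sq_abs]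
  nlinarith [mul_le_mul_of_nonneg_left hgain hτ]

theorem norm_smul_le_of_hpe_error (hlam : 0 ≤ lam) (hε : 0 ≤ ε) (hσ : 0 ≤ σ)
    (herr : ‖lam • v + zt - w‖ ^ 2 + 2 * lam * ε ≤ σ ^ 2 * ‖zt - w‖ ^ 2) :
    ‖lam • v‖ ≤ (1 + σ) * ‖zt - w‖ := by
  have hres : ‖lam • v + (zt - w)‖ ≤ σ * ‖zt - w‖ := by
    apply pow_le_pow_iff_left₀ (norm_nonneg _) (by positivity) two_ne_zero |>.mp
    rw [mul_pow, ← add_sub_assoc]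
    nlinarith [mul_nonneg hlam hε]
  calc ‖lam • v‖ = ‖(lam • v + (zt - w)) - (zt - w)‖ := by rw [add_sub_cancel_right]
    _ ≤ ‖lam • v + (zt - w)‖ + ‖zt - w‖ := norm_sub_le _ _
    _ ≤ (1 + σ) * ‖zt - w‖ := by linarith

end HPEStep

theorem relaxation_mul_sq_le {σ τ A D : ℝ} (hσ : -1 < σ) (hσ1 : σ < 1) (hτ : 0 < τ)
    (hAD : A ^ 2 ≤ ((1 + σ) * D) ^ 2) :
    (2 / ((1 + σ) * τ) - 1) * (τ * A) ^ 2 ≤ τ * (1 - τ) * A ^ 2 + τ * (1 - σ ^ 2) * D ^ 2 := by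
  have h1σ : 0 < 1 + σ := by linarith
  -- the gap is `τ (1 − σ) / (1 + σ) · ((1 + σ)² D² − A²)`
  rw [div_sub_one (by positivity), div_mul_eq_mul_div, div_le_iff₀ (by positivity)]
  nlinarith [mul_le_mul_of_nonneg_left hAD (by nlinarith : 0 ≤ τ * τ * (1 - σ))]

/-- `z k` is the paper's `z_k` for `k ≥ 0`; the paper's `z_{−1} = z₀` (hence `φ₀ = φ_{−1}`) is
encoded by truncated subtraction, `0 - 1 = 0`. -/
theorem stmt9_general
    {H : Type*} [NormedAddCommGroup H] [InnerProductSpace ℝ H]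
    (T : H → Set H)
    (σ τ : ℝ) (hσ0 : 0 ≤ σ) (hσ1 : σ < 1)
    (hτ0 : 0 < τ) (hτ1 : τ ≤ 1)
    (z w ztil v : ℕ → H) (ε lam αs : ℕ → ℝ)
    (hw : ∀ k, w k = z k + αs k • (z k - z (k - 1)))
    (hlam : ∀ k, 1 ≤ k → 0 < lam k)
    (hεnn : ∀ k, 1 ≤ k → 0 ≤ ε k)
    (hin : ∀ k, 1 ≤ k → v k ∈ enl T (ε k) (ztil k))
    (herr : ∀ k, 1 ≤ k →
      ‖lam k • v k + ztil k - w (k - 1)‖ ^ 2 + 2 * lam k * ε k ≤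
        σ ^ 2 * ‖ztil k - w (k - 1)‖ ^ 2)
    (hz : ∀ k, 1 ≤ k → z k = w (k - 1) - (τ * lam k) • v k)
    (zs : H) (hzs : (0 : H) ∈ T zs)
    (η : ℝ) (hη : η = 2 / ((1 + σ) * τ) - 1)
    (φ δ s : ℕ → ℝ)
    (hφ : ∀ k, φ k = ‖z k - zs‖ ^ 2)
    (hδ : ∀ k, 1 ≤ k →
      δ k = αs (k - 1) * (1 + αs (k - 1)) * ‖z (k - 1) - z (k - 2)‖ ^ 2)
    (hs : ∀ k, 1 ≤ k →
      s k = max (η * ‖z k - w (k - 1)‖ ^ 2) ((1 - σ ^ 2) * τ * ‖ztil k - w (k - 1)‖ ^ 2)) :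
    ∀ k, 1 ≤ k →
      φ k - φ (k - 1) + s k ≤ αs (k - 1) * (φ (k - 1) - φ (k - 2)) + δ k := by
  intro k hk
  obtain ⟨j, rfl⟩ : ∃ j, k = j + 1 := ⟨k - 1, by omega⟩
  have hj : j + 1 - 2 = j - 1 := by omega
  have herrk := herr _ hk
  have hzk := hz _ hk
  have hsk := hs _ hk
  have hδk := hδ _ hk
  simp only [add_tsub_cancel_right, hj] at herrk hzk hsk hδk ⊢
  have hl := (hlam _ hk).le
  have hgain := gain_le_norm_sq_decrease_of_hpe_error hl hτ0.le herrk
    (neg_le_inner_of_mem_enl_of_zero_mem (hin _ hk) hzs)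
  have hnorm := norm_smul_le_of_hpe_error hl (hεnn _ hk) hσ0 herrk
  have hdecrease : s (j + 1) ≤ ‖w j - zs‖ ^ 2 - φ (j + 1) := by
    have hstep : ‖z (j + 1) - w j‖ = τ * ‖lam (j + 1) • v (j + 1)‖ := by
      rw [hzk, sub_sub_cancel_left, norm_neg, mul_smul, norm_smul, Real.norm_eq_abs,
        abs_of_pos hτ0]
    rw [hsk, hstep, hφ, hzk, hη]
    refine max_le ((relaxation_mul_sq_le (by linarith) hσ1 hτ0 ?_).trans hgain) ?_
    · exact pow_le_pow_left₀ (norm_nonneg _) hnorm 2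
    · linarith [mul_nonneg (mul_nonneg hτ0.le (sub_nonneg.mpr hτ1))
        (sq_nonneg ‖lam (j + 1) • v (j + 1)‖)]
  have hinertial := norm_sq_sub_inertial (z j) (z (j - 1)) zs (αs j)
  rw [← hw, ← hφ, ← hφ] at hinertial
  linarith

/-- the sequences `φ_k`, `s_k`, `α_k`, `δ_k` built from Algorithm 1 satisfy the
Alvarez–Attouch recursion.  Indexing convention: `z k` is the paper's `z_k` for `k ≥ 0`, the
paper's `z_{−1} = z₀` (hence `φ₀ = φ_{−1}`) being encoded by truncated subtraction. -/
theorem stmt9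
    {H : Type*} [NormedAddCommGroup H] [InnerProductSpace ℝ H] [CompleteSpace H]
    (T : H → Set H) (hT : IsMaximalMonotoneOp T)
    (α σ τ : ℝ) (hα0 : 0 ≤ α) (hα1 : α < 1) (hσ0 : 0 ≤ σ) (hσ1 : σ < 1)
    (hτ0 : 0 < τ) (hτ1 : τ ≤ 1)
    (z w ztil v : ℕ → H) (ε lam αs : ℕ → ℝ)
    (hαs : ∀ k, 0 ≤ αs k ∧ αs k ≤ α)
    (hw : ∀ k, w k = z k + αs k • (z k - z (k - 1)))
    (hlam : ∀ k, 1 ≤ k → 0 < lam k)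
    (hεnn : ∀ k, 1 ≤ k → 0 ≤ ε k)
    (hin : ∀ k, 1 ≤ k → v k ∈ enl T (ε k) (ztil k))
    (herr : ∀ k, 1 ≤ k →
      ‖lam k • v k + ztil k - w (k - 1)‖ ^ 2 + 2 * lam k * ε k ≤
        σ ^ 2 * ‖ztil k - w (k - 1)‖ ^ 2)
    (hz : ∀ k, 1 ≤ k → z k = w (k - 1) - (τ * lam k) • v k)
    (zs : H) (hzs : (0 : H) ∈ T zs)
    (η : ℝ) (hη : η = 2 / ((1 + σ) * τ) - 1)
    (φ δ s : ℕ → ℝ)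
    (hφ : ∀ k, φ k = ‖z k - zs‖ ^ 2)
    (hδ : ∀ k, 1 ≤ k →
      δ k = αs (k - 1) * (1 + αs (k - 1)) * ‖z (k - 1) - z (k - 2)‖ ^ 2)
    (hs : ∀ k, 1 ≤ k →
      s k = max (η * ‖z k - w (k - 1)‖ ^ 2) ((1 - σ ^ 2) * τ * ‖ztil k - w (k - 1)‖ ^ 2)) :
    ∀ k, 1 ≤ k →
      φ k - φ (k - 1) + s k ≤ αs (k - 1) * (φ (k - 1) - φ (k - 2)) + δ k :=
  stmt9_general T σ τ hσ0 hσ1 hτ0 hτ1 z w ztil v ε lam αs hw hlam hεnn hin herr hz zs hzs η hη φ δ s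
    hφ hδ hs
end

section
/- Let {z_k}, {λ_k}, {α_k} be generated by Algorithm 1 (inertial under-relaxed HPE) for a maximal monotone operator T on a real Hilbert space H with T⁻¹(0) nonempty, and assume Assumption (A) holds. Let η := 2/((1+σ)τ) − 1 and q(t) := (η−1)t² − (1+2η)t + η. Then q(α) > 0; for every z* with 0 ∈ T(z*) and every k ≥ 1, Σ_{j=1}^k ‖z_j − z_{j−1}‖² ≤ 2‖z₀ − z*‖² / ((1−α) q(α)); and if moreover λ_k ≥ λ̲ > 0 for all k ≥ 1, then {z_k} converges weakly to a point z with 0 ∈ T(z). -/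
/-!
Each HPE step is Fejér-monotone with respect to every zero `z*` of `T`:
`‖z_{k+1} - z*‖² ≤ ‖w_k - z*‖² - η ‖z_{k+1} - w_k‖²`. Expanding the inertial point `w_k`
turns this into the decrease of the Lyapunov energy
`‖z_k - z*‖² - α_k ‖z_{k-1} - z*‖² + B ‖z_k - z_{k-1}‖²` by `q(α) ‖z_{k+1} - z_k‖²`, and the
choice of `τ` in Assumption (A) is exactly what makes `q(α) > 0`. Telescoping bounds the
iterates and `∑ ‖z_j - z_{j-1}‖²`; the Alvarez–Attouch lemma then shows that `‖z_k - z*‖`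
converges. When `λ_k ≥ λ̲ > 0`, the residuals `v_k`, `ε_k` and `z̃_k - z_k` tend to zero, so by
maximality of `T` every weak cluster point of `(z_k)` is a zero of `T`, and Opial's argument
yields weak convergence.
-/

open Filter Finset Topology
open scoped RealInnerProductSpace

theorem eta_eq_of_tau_eq {σ τ β' : ℝ} (hσ : 1 + σ ≠ 0) (hβ' : β' ≠ 1)
    (hτ : τ = 2 * (β' - 1) ^ 2 / ((1 + σ) * (2 * (β' - 1) ^ 2 + 3 * β' - 1))) :
    2 / ((1 + σ) * τ) - 1 = (β' ^ 2 + β') / (β' - 1) ^ 2 := by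
  have : β' - 1 ≠ 0 := sub_ne_zero.2 hβ'
  have : 2 * (β' - 1) ^ 2 + 3 * β' - 1 ≠ 0 := by nlinarith [sq_nonneg (β' - 1 / 4)]
  subst hτ
  field_simp
  ring

-- `t ↦ t (1 + t) / (1 - t)²` is increasing on `[0, 1)`.
theorem div_sq_mul_sub_pos {a b : ℝ} (ha : 0 ≤ a) (hab : a < b) (hb : b < 1) :
    0 < (b ^ 2 + b) / (b - 1) ^ 2 * (1 - a) ^ 2 - a * (1 + a) := by
  rw [sub_pos, div_mul_eq_mul_div, lt_div_iff₀ (by nlinarith)]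
  nlinarith [mul_pos (sub_pos.2 hab) (by nlinarith : 0 < 1 + a + b - 3 * a * b)]

theorem summable_of_le_mul_add_s11 {Θ δ : ℕ → ℝ} {a : ℝ} (ha1 : a < 1)
    (hΘ : ∀ k, 0 ≤ Θ k) (hδ0 : ∀ k, 0 ≤ δ k) (hδ : Summable δ)
    (h : ∀ k, Θ (k + 1) ≤ a * Θ k + δ k) : Summable Θ := by
  refine summable_of_sum_range_le hΘ (c := (Θ 0 + ∑' k, δ k) / (1 - a)) fun n => ?_
  have hmono : ∑ k ∈ range n, Θ k ≤ ∑ k ∈ range (n + 1), Θ k :=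
    sum_range_succ Θ n ▸ le_add_of_nonneg_right (hΘ n)
  have hrec : ∑ k ∈ range (n + 1), Θ k ≤ Θ 0 + a * ∑ k ∈ range n, Θ k + ∑' k, δ k := by
    calc ∑ k ∈ range (n + 1), Θ k = ∑ k ∈ range n, Θ (k + 1) + Θ 0 := sum_range_succ' Θ n
      _ ≤ ∑ k ∈ range n, (a * Θ k + δ k) + Θ 0 := by gcongr with k; exact h k
      _ = a * ∑ k ∈ range n, Θ k + ∑ k ∈ range n, δ k + Θ 0 := by
        rw [sum_add_distrib, mul_sum]
      _ ≤ Θ 0 + a * ∑ k ∈ range n, Θ k + ∑' k, δ k := by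
        linarith [hδ.sum_le_tsum (range n) fun k _ => hδ0 k]
  rw [le_div_iff₀ (sub_pos.2 ha1)]
  linarith

theorem exists_tendsto_of_le_add_summable {φ θ : ℕ → ℝ} (hφ : BddBelow (Set.range φ))
    (hθ : Summable θ) (h : ∀ k, φ (k + 1) ≤ φ k + θ k) : ∃ r, Tendsto φ atTop (𝓝 r) := by
  have hsum := hθ.hasSum.tendsto_sum_nat
  obtain ⟨m, hm⟩ := hφ
  obtain ⟨s, hs⟩ := hsum.bddAbove_range
  have hanti : Antitone fun n => φ n - ∑ k ∈ range n, θ k :=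
    antitone_nat_of_succ_le fun n => by rw [sum_range_succ]; linarith [h n]
  have hbdd : BddBelow (Set.range fun n => φ n - ∑ k ∈ range n, θ k) :=
    ⟨m - s, by rintro _ ⟨n, rfl⟩; linarith [hm ⟨n, rfl⟩, hs ⟨n, rfl⟩]⟩
  exact ⟨_, ((tendsto_atTop_ciInf hanti hbdd).add hsum).congr fun n => sub_add_cancel _ _⟩

/-- The convergence lemma of Alvarez and Attouch for inertial schemes. -/
theorem exists_tendsto_of_inertial_le {φ a δ : ℕ → ℝ} {α : ℝ} (hα1 : α < 1)
    (hφ : BddBelow (Set.range φ)) (ha0 : ∀ k, 0 ≤ a k) (haα : ∀ k, a k ≤ α)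
    (hδ0 : ∀ k, 0 ≤ δ k) (hδ : Summable δ)
    (h : ∀ k, φ (k + 2) - φ (k + 1) ≤ a k * (φ (k + 1) - φ k) + δ k) :
    ∃ r, Tendsto φ atTop (𝓝 r) := by
  set Θ : ℕ → ℝ := fun k => max (φ (k + 1) - φ k) 0
  have hΘ : ∀ k, 0 ≤ Θ k := fun k => le_max_right _ _
  have hα0 : 0 ≤ α := (ha0 0).trans (haα 0)
  have hstep : ∀ k, Θ (k + 1) ≤ α * Θ k + δ k := fun k => by
    have : a k * (φ (k + 1) - φ k) ≤ α * Θ k :=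
      (mul_le_mul_of_nonneg_left (le_max_left _ _) (ha0 k)).trans
        (mul_le_mul_of_nonneg_right (haα k) (hΘ k))
    exact max_le (by linarith [h k]) (add_nonneg (mul_nonneg hα0 (hΘ k)) (hδ0 k))
  exact exists_tendsto_of_le_add_summable hφ (summable_of_le_mul_add_s11 hα1 hΘ hδ0 hδ hstep)
    fun k => by linarith [le_max_left (φ (k + 1) - φ k) 0]

theorem inertial_energy_le {φ d a : ℕ → ℝ} {α B c : ℝ} (hφ : ∀ k, 0 ≤ φ k) (hd : ∀ k, 0 ≤ d k)
    (hd0 : d 0 = 0) (hB : 0 ≤ B) (ha0 : ∀ k, 0 ≤ a k) (haα : ∀ k, a k ≤ α)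
    (ha : ∀ k, a k ≤ a (k + 1))
    (h : ∀ k, φ (k + 1) ≤ φ k + a k * (φ k - φ (k - 1)) + B * d k - c * d (k + 1)) (k : ℕ) :
    φ k - α * φ (k - 1) + (c - B) * ∑ j ∈ Icc 1 k, d j ≤ φ 0 := by
  -- the Lyapunov energy `E k` decreases by `(c - B) * d (k + 1)` at each step
  set E : ℕ → ℝ := fun k => φ k - a k * φ (k - 1) + B * d k
  have hE : ∀ k, E k + (c - B) * ∑ j ∈ Icc 1 k, d j ≤ E 0 := by
    intro k
    induction k with
    | zero => simp
    | succ n ih =>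
      rw [sum_Icc_succ_top (by omega), mul_add]
      have := mul_le_mul_of_nonneg_right (ha n) (hφ n)
      simp only [E, Nat.add_sub_cancel] at ih ⊢
      linarith [h n]
  have h0 : E 0 ≤ φ 0 := by simp only [E, hd0]; nlinarith [ha0 0, hφ 0]
  have hk : φ k - α * φ (k - 1) ≤ E k := by
    simp only [E]; nlinarith [haα k, hφ (k - 1), mul_nonneg hB (hd k)]
  linarith [hE k]

theorem le_div_one_sub_of_sub_mul_pred_le {φ : ℕ → ℝ} {α : ℝ} (hα0 : 0 ≤ α) (hα1 : α < 1)
    (hφ0 : 0 ≤ φ 0) (h : ∀ k, φ k - α * φ (k - 1) ≤ φ 0) (k : ℕ) : φ k ≤ φ 0 / (1 - α) := by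
  rw [le_div_iff₀ (sub_pos.2 hα1)]
  induction k with
  | zero => nlinarith
  | succ n ih =>
    have hn : φ (n + 1) ≤ φ 0 + α * φ n := by
      have := h (n + 1)
      simp only [Nat.add_sub_cancel] at this
      linarith
    nlinarith [mul_le_mul_of_nonneg_left hn (sub_pos.2 hα1).le, mul_le_mul_of_nonneg_left ih hα0]

section Weak

variable {H : Type*} [NormedAddCommGroup H] [InnerProductSpace ℝ H] {ι : Type*}

def WeakTendsto (x : ι → H) (l : Filter ι) (p : H) : Prop :=
  ∀ y, Tendsto (fun k => ⟪x k, y⟫) l (𝓝 ⟪p, y⟫)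

theorem exists_weakTendsto_of_isBounded [CompleteSpace H] {x : ι → H}
    (hx : Bornology.IsBounded (Set.range x)) (𝒱 : Ultrafilter ι) : ∃ p, WeakTendsto x 𝒱 p := by
  obtain ⟨M, hM⟩ := isBounded_iff_forall_norm_le.1 hx
  -- Banach–Alaoglu for the Riesz representatives of the `x k`
  let f : ι → WeakDual ℝ H := fun k => StrongDual.toWeakDual (InnerProductSpace.toDual ℝ H (x k))
  obtain ⟨g, -, hg⟩ := (WeakDual.isCompact_closedBall (0 : StrongDual ℝ H) M).ultrafilter_le_nhds'
    (𝒱.map f) (Ultrafilter.mem_map.2 (Filter.univ_mem' fun k => by simpa [f] using hM _ ⟨k, rfl⟩))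
  refine ⟨(InnerProductSpace.toDual ℝ H).symm (WeakDual.toStrongDual g), fun y => ?_⟩
  rw [InnerProductSpace.toDual_symm_apply]
  exact tendsto_iff_forall_eval_tendsto_topDualPairing.1 hg y

theorem WeakTendsto.of_tendsto_sub {l : Filter ι} {x x' : ι → H} {p : H} (hx : WeakTendsto x l p)
    (h : Tendsto (fun k => x' k - x k) l (𝓝 0)) : WeakTendsto x' l p := fun y => by
  have := (hx y).add ((h.inner tendsto_const_nhds : Tendsto (fun k => ⟪x' k - x k, y⟫) l _))
  simpa [inner_sub_left] using this

theorem IsMaximalMonotoneOp.mem_of_forall_inner_nonneg_s11 {T : H → Set H} (hT : IsMaximalMonotoneOp T)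
    {p u : H} (h : ∀ y u', u' ∈ T y → 0 ≤ ⟪p - y, u - u'⟫) : u ∈ T p := by
  -- adjoining `(p, u)` to the graph of `T` keeps it monotone
  let S : H → Set H := fun x => {u' | u' ∈ T x ∨ (x = p ∧ u' = u)}
  have hS : IsMonotoneOp S := by
    rintro x x' w w' (hw | ⟨rfl, rfl⟩) (hw' | ⟨rfl, rfl⟩)
    · exact hT.1 hw hw'
    · simpa only [← neg_sub x x', ← neg_sub w w', inner_neg_neg] using h x w hw
    · exact h x' w' hw'
    · simp
  exact hT.2 S hS (fun _ _ hu => Or.inl hu) p (Or.inr ⟨rfl, rfl⟩)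

theorem IsMaximalMonotoneOp.mem_of_weakTendsto {T : H → Set H} (hT : IsMaximalMonotoneOp T)
    {l : Filter ι} [l.NeBot] {x v : ι → H} {ε : ι → ℝ} {p u : H} (hx : WeakTendsto x l p)
    (hbdd : IsBoundedUnder (· ≤ ·) l fun k => ‖x k‖) (hv : Tendsto v l (𝓝 u))
    (hε : Tendsto ε l (𝓝 0)) (hmem : ∀ᶠ k in l, v k ∈ enl T (ε k) (x k)) : u ∈ T p := by
  refine hT.mem_of_forall_inner_nonneg_s11 fun y u' hu' => ?_
  have hxv : Tendsto (fun k => ⟪x k, v k - u⟫) l (𝓝 0) :=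
    (tendsto_sub_nhds_zero_iff.2 hv).op_zero_isBoundedUnder_le hbdd (fun a b => ⟪b, a⟫)
      fun a b => by rw [mul_comm]; exact norm_inner_le_norm b a
  have hlim : Tendsto (fun k => ⟪x k - y, v k - u'⟫ + ε k) l (𝓝 ⟪p - y, u - u'⟫) := by
    have hyv : Tendsto (fun k => ⟪y, v k - u'⟫) l (𝓝 ⟪y, u - u'⟫) :=
      tendsto_const_nhds.inner (hv.sub_const u')
    convert ((hxv.add (hx (u - u'))).sub hyv).add hε using 2 <;>
      simp only [inner_sub_left, inner_sub_right] <;> ring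
  exact ge_of_tendsto hlim (hmem.mono fun k hk => by linarith [hk y u' hu'])

/-- Opial's lemma, with weak cluster points taken along ultrafilters. -/
theorem exists_weakTendsto_of_tendsto_sq_norm_sub [CompleteSpace H] {l : Filter ι} [l.NeBot]
    {x : ι → H} {S : Set H} (hx : Bornology.IsBounded (Set.range x))
    (hS : ∀ p ∈ S, ∃ r, Tendsto (fun k => ‖x k - p‖ ^ 2) l (𝓝 r))
    (hclus : ∀ (𝒱 : Ultrafilter ι) (p : H), ↑𝒱 ≤ l → WeakTendsto x 𝒱 p → p ∈ S) :
    ∃ p ∈ S, WeakTendsto x l p := by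
  have huniq : ∀ (𝒱₁ 𝒱₂ : Ultrafilter ι) (p₁ p₂ : H), ↑𝒱₁ ≤ l → ↑𝒱₂ ≤ l →
      WeakTendsto x 𝒱₁ p₁ → WeakTendsto x 𝒱₂ p₂ → p₁ = p₂ := by
    intro 𝒱₁ 𝒱₂ p₁ p₂ h₁ h₂ hp₁ hp₂
    obtain ⟨r₁, hr₁⟩ := hS p₁ (hclus 𝒱₁ p₁ h₁ hp₁)
    obtain ⟨r₂, hr₂⟩ := hS p₂ (hclus 𝒱₂ p₂ h₂ hp₂)
    -- `⟪x k, p₁ - p₂⟫` is an affine combination of `‖x k - p₁‖²` and `‖x k - p₂‖²`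
    have hinner : Tendsto (fun k => ⟪x k, p₁ - p₂⟫) l
        (𝓝 ((‖p₁‖ ^ 2 - ‖p₂‖ ^ 2 - (r₁ - r₂)) / 2)) := by
      refine ((tendsto_const_nhds.sub (hr₁.sub hr₂)).div_const 2).congr fun k => ?_
      rw [inner_sub_right, norm_sub_sq_real, norm_sub_sq_real]
      ring
    have e₁ := tendsto_nhds_unique (hp₁ (p₁ - p₂)) (hinner.mono_left h₁)
    have e₂ := tendsto_nhds_unique (hp₂ (p₁ - p₂)) (hinner.mono_left h₂)
    rw [← sub_eq_zero, ← inner_self_eq_zero (𝕜 := ℝ), inner_sub_left, e₁, e₂, sub_self]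
  obtain ⟨p, hp⟩ := exists_weakTendsto_of_isBounded hx (Ultrafilter.of l)
  refine ⟨p, hclus _ p (Ultrafilter.of_le l) hp,
    fun y => (tendsto_iff_ultrafilter _ _ _).2 fun 𝒱 h𝒱 => ?_⟩
  obtain ⟨p', hp'⟩ := exists_weakTendsto_of_isBounded hx 𝒱
  rw [huniq _ _ p p' (Ultrafilter.of_le l) h𝒱 hp hp']
  exact hp' y

end Weak

section HPEStep

variable {H : Type*} [NormedAddCommGroup H] [InnerProductSpace ℝ H]

theorem norm_add_le_of_hpe_error {σ lam ε : ℝ} {V Zt W : H} (hσ : 0 ≤ σ) (hlamε : 0 ≤ lam * ε)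
    (herr : ‖lam • V + Zt - W‖ ^ 2 + 2 * lam * ε ≤ σ ^ 2 * ‖Zt - W‖ ^ 2) :
    ‖lam • V + (Zt - W)‖ ≤ σ * ‖Zt - W‖ := by
  rw [← pow_le_pow_iff_left₀ (norm_nonneg _) (by positivity) two_ne_zero, mul_pow, ← add_sub_assoc]
  linarith

theorem one_sub_mul_norm_le_of_hpe_error {σ lam ε : ℝ} {V Zt W : H} (hσ : 0 ≤ σ)
    (hlamε : 0 ≤ lam * ε)
    (herr : ‖lam • V + Zt - W‖ ^ 2 + 2 * lam * ε ≤ σ ^ 2 * ‖Zt - W‖ ^ 2) :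
    (1 - σ) * ‖Zt - W‖ ≤ ‖lam • V‖ := by
  have h := norm_add_le_of_hpe_error hσ hlamε herr
  have := norm_sub_le (lam • V + (Zt - W)) (lam • V)
  rw [add_sub_cancel_left] at this
  linarith

theorem sq_norm_le_inner_of_hpe {σ lam ε : ℝ} {V Zt W zs : H} (hσ0 : 0 ≤ σ) (hσ1 : σ ≤ 1)
    (hlam : 0 ≤ lam) (hε : 0 ≤ ε) (henl : -ε ≤ ⟪Zt - zs, V⟫)
    (herr : ‖lam • V + Zt - W‖ ^ 2 + 2 * lam * ε ≤ σ ^ 2 * ‖Zt - W‖ ^ 2) :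
    ‖lam • V‖ ^ 2 ≤ (1 + σ) * ⟪lam • V, W - zs⟫ := by
  have hlamε : 0 ≤ lam * ε := mul_nonneg hlam hε
  have hu : ‖lam • V‖ ≤ (1 + σ) * ‖Zt - W‖ := by
    have := norm_sub_le (lam • V + (Zt - W)) (Zt - W)
    rw [add_sub_cancel_right] at this
    linarith [norm_add_le_of_hpe_error hσ0 hlamε herr]
  have hu2 : ‖lam • V‖ ^ 2 ≤ (1 + σ) ^ 2 * ‖Zt - W‖ ^ 2 := by
    rw [← mul_pow]; exact pow_le_pow_left₀ (norm_nonneg _) hu 2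
  rw [add_sub_assoc, norm_add_sq_real] at herr
  have henl' : -(lam * ε) ≤ ⟪lam • V, Zt - zs⟫ := by
    rw [real_inner_smul_left, real_inner_comm]; nlinarith
  rw [← sub_sub_sub_cancel_left zs W Zt, inner_sub_right]
  nlinarith [mul_le_mul_of_nonneg_left hu2 (sub_nonneg.2 hσ1)]

theorem sq_norm_sub_le_of_sq_norm_le_inner {σ τ : ℝ} {u W Z zs : H} (hσ : 0 < 1 + σ) (hτ : 0 < τ)
    (hZ : Z = W - τ • u) (hu : ‖u‖ ^ 2 ≤ (1 + σ) * ⟪u, W - zs⟫) :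
    ‖Z - zs‖ ^ 2 ≤ ‖W - zs‖ ^ 2 - (2 / ((1 + σ) * τ) - 1) * ‖Z - W‖ ^ 2 := by
  have hZW : ‖Z - W‖ ^ 2 = τ ^ 2 * ‖u‖ ^ 2 := by
    rw [hZ, sub_sub_cancel_left, norm_neg, norm_smul, Real.norm_of_nonneg hτ.le, mul_pow]
  have hZzs : ‖Z - zs‖ ^ 2 = ‖W - zs‖ ^ 2 - 2 * τ * ⟪u, W - zs⟫ + τ ^ 2 * ‖u‖ ^ 2 := by
    rw [hZ, sub_right_comm, norm_sub_sq_real, real_inner_smul_right, norm_smul,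
      Real.norm_of_nonneg hτ.le, mul_pow, real_inner_comm]
    ring
  have hcoef : (2 / ((1 + σ) * τ) - 1) * τ ^ 2 = 2 * τ / (1 + σ) - τ ^ 2 := by
    field_simp
  have : 2 * τ / (1 + σ) * ‖u‖ ^ 2 ≤ 2 * τ * ⟪u, W - zs⟫ := by
    rw [div_mul_eq_mul_div, div_le_iff₀ hσ]; nlinarith
  rw [hZzs, hZW]
  nlinarith

theorem norm_add_smul_sub_sq (x y : H) (a : ℝ) :
    ‖x + a • (x - y)‖ ^ 2 = ‖x‖ ^ 2 + a * (‖x‖ ^ 2 - ‖y‖ ^ 2) + a * (1 + a) * ‖x - y‖ ^ 2 := by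
  rw [norm_add_sq_real, norm_smul, Real.norm_eq_abs, mul_pow, sq_abs, real_inner_smul_right,
    inner_sub_right, real_inner_self_eq_norm_sq, norm_sub_sq_real x y]
  ring

theorem le_sq_norm_sub_smul (u v : H) {a c : ℝ} (hc : 0 ≤ c) (hca : c ≤ a) (ha : a ≤ 1) :
    (1 - a) * ‖u‖ ^ 2 - a * (1 - a) * ‖v‖ ^ 2 ≤ ‖u - c • v‖ ^ 2 := by
  have hnorm : (‖u‖ - c * ‖v‖) ^ 2 ≤ ‖u - c • v‖ ^ 2 := by
    have h := abs_norm_sub_norm_le u (c • v)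
    rw [norm_smul, Real.norm_of_nonneg hc] at h
    rw [← sq_abs]
    exact pow_le_pow_left₀ (abs_nonneg _) h 2
  -- the difference is a quadratic form in `(‖u‖, ‖v‖)` with discriminant `(1 - a) (c² - a²) ≤ 0`
  have hquad : 0 ≤ a * ‖u‖ ^ 2 - 2 * c * ‖u‖ * ‖v‖ + (c ^ 2 + a - a ^ 2) * ‖v‖ ^ 2 := by
    rcases (hc.trans hca).eq_or_lt with rfl | ha0
    · obtain rfl : c = 0 := le_antisymm hca hc
      simp
    · refine (mul_nonneg_iff_of_pos_left ha0).1 ?_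
      nlinarith [sq_nonneg (a * ‖u‖ - c * ‖v‖),
        mul_nonneg (mul_nonneg (sub_nonneg.2 ha) (mul_nonneg (sub_nonneg.2 hca) (by linarith :
          0 ≤ a + c))) (sq_nonneg ‖v‖)]
  nlinarith

end HPEStep

/-- Algorithm 1, with the iteration counter shifted: the paper's step `k ≥ 1` is step `k + 1`
here. -/
structure IsInertialHPE {H : Type*} [NormedAddCommGroup H] [InnerProductSpace ℝ H]
    (T : H → Set H) (α σ τ : ℝ) (z w ztil v : ℕ → H) (ε lam αs : ℕ → ℝ) : Prop where
  αs_nonneg : ∀ k, 0 ≤ αs k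
  αs_le : ∀ k, αs k ≤ α
  αs_mono : ∀ k, αs k ≤ αs (k + 1)
  w_eq : ∀ k, w k = z k + αs k • (z k - z (k - 1))
  lam_pos : ∀ k, 0 < lam (k + 1)
  ε_nonneg : ∀ k, 0 ≤ ε (k + 1)
  mem_enl : ∀ k, v (k + 1) ∈ enl T (ε (k + 1)) (ztil (k + 1))
  err_le : ∀ k, ‖lam (k + 1) • v (k + 1) + ztil (k + 1) - w k‖ ^ 2 + 2 * lam (k + 1) * ε (k + 1) ≤
    σ ^ 2 * ‖ztil (k + 1) - w k‖ ^ 2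
  z_eq : ∀ k, z (k + 1) = w k - (τ * lam (k + 1)) • v (k + 1)

namespace IsInertialHPE

variable {H : Type*} [NormedAddCommGroup H] [InnerProductSpace ℝ H] {T : H → Set H}
  {α σ τ : ℝ} {z w ztil v : ℕ → H} {ε lam αs : ℕ → ℝ}

theorem sq_norm_sub_le_of_zero_mem (hA : IsInertialHPE T α σ τ z w ztil v ε lam αs)
    (hσ0 : 0 ≤ σ) (hσ1 : σ ≤ 1) (hτ : 0 < τ) {zs : H} (hzs : 0 ∈ T zs) (k : ℕ) :
    ‖z (k + 1) - zs‖ ^ 2 ≤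
      ‖w k - zs‖ ^ 2 - (2 / ((1 + σ) * τ) - 1) * ‖z (k + 1) - w k‖ ^ 2 :=
  sq_norm_sub_le_of_sq_norm_le_inner (by linarith) hτ (by rw [hA.z_eq, mul_smul])
    (sq_norm_le_inner_of_hpe hσ0 hσ1 (hA.lam_pos k).le (hA.ε_nonneg k)
      (by simpa using hA.mem_enl k zs 0 hzs) (hA.err_le k))

theorem sq_norm_sub_le_inertial (hA : IsInertialHPE T α σ τ z w ztil v ε lam αs)
    (hσ0 : 0 ≤ σ) (hσ1 : σ ≤ 1) (hτ : 0 < τ) (hα1 : α ≤ 1) {η : ℝ} (hη0 : 0 ≤ η)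
    (hη : η ≤ 2 / ((1 + σ) * τ) - 1) {zs : H} (hzs : 0 ∈ T zs) (k : ℕ) :
    ‖z (k + 1) - zs‖ ^ 2 ≤ ‖z k - zs‖ ^ 2 + αs k * (‖z k - zs‖ ^ 2 - ‖z (k - 1) - zs‖ ^ 2) +
      (α * (1 + α) + η * α * (1 - α)) * ‖z k - z (k - 1)‖ ^ 2 -
      η * (1 - α) * ‖z (k + 1) - z k‖ ^ 2 := by
  have hstep := hA.sq_norm_sub_le_of_zero_mem hσ0 hσ1 hτ hzs k
  have hw : ‖w k - zs‖ ^ 2 = ‖z k - zs‖ ^ 2 + αs k * (‖z k - zs‖ ^ 2 - ‖z (k - 1) - zs‖ ^ 2) +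
      αs k * (1 + αs k) * ‖z k - z (k - 1)‖ ^ 2 := by
    have : w k - zs = (z k - zs) + αs k • ((z k - zs) - (z (k - 1) - zs)) := by
      rw [hA.w_eq, sub_sub_sub_cancel_right, add_sub_right_comm]
    rw [this, norm_add_smul_sub_sq, sub_sub_sub_cancel_right]
  have hzw : (1 - α) * ‖z (k + 1) - z k‖ ^ 2 - α * (1 - α) * ‖z k - z (k - 1)‖ ^ 2 ≤
      ‖z (k + 1) - w k‖ ^ 2 := by
    rw [hA.w_eq, ← sub_sub]
    exact le_sq_norm_sub_smul _ _ (hA.αs_nonneg k) (hA.αs_le k) hα1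
  have hαs : αs k * (1 + αs k) ≤ α * (1 + α) := by
    nlinarith [hA.αs_nonneg k, hA.αs_le k]
  nlinarith [mul_le_mul_of_nonneg_right hαs (sq_nonneg ‖z k - z (k - 1)‖),
    mul_le_mul_of_nonneg_left hzw hη0, mul_le_mul_of_nonneg_right hη (sq_nonneg ‖z (k + 1) - w k‖),
    mul_nonneg (mul_nonneg hη0 ((hA.αs_nonneg 0).trans (hA.αs_le 0))) (sq_nonneg ‖z k - z (k - 1)‖)]

theorem sq_norm_sub_le_and_sum_le (hA : IsInertialHPE T α σ τ z w ztil v ε lam αs)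
    (hσ0 : 0 ≤ σ) (hσ1 : σ ≤ 1) (hτ : 0 < τ) (hα1 : α < 1) {η : ℝ}
    (hη : η ≤ 2 / ((1 + σ) * τ) - 1) (hq : 0 < η * (1 - α) ^ 2 - α * (1 + α)) {zs : H}
    (hzs : 0 ∈ T zs) :
    (∀ k, ‖z k - zs‖ ^ 2 ≤ ‖z 0 - zs‖ ^ 2 / (1 - α)) ∧
      ∀ k, (η * (1 - α) ^ 2 - α * (1 + α)) * ∑ j ∈ Icc 1 k, ‖z j - z (j - 1)‖ ^ 2 ≤
        ‖z 0 - zs‖ ^ 2 / (1 - α) := by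
  have hα0 : 0 ≤ α := (hA.αs_nonneg 0).trans (hA.αs_le 0)
  have hη0 : 0 ≤ η := by nlinarith [sq_nonneg (1 - α), mul_nonneg hα0 (by linarith : 0 ≤ 1 + α)]
  have henergy : ∀ k, ‖z k - zs‖ ^ 2 - α * ‖z (k - 1) - zs‖ ^ 2 +
      (η * (1 - α) ^ 2 - α * (1 + α)) * ∑ j ∈ Icc 1 k, ‖z j - z (j - 1)‖ ^ 2 ≤
        ‖z 0 - zs‖ ^ 2 := fun k => by
    have := inertial_energy_le (φ := fun k => ‖z k - zs‖ ^ 2)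
      (d := fun k => ‖z k - z (k - 1)‖ ^ 2) (fun _ => sq_nonneg _) (fun _ => sq_nonneg _) (by simp)
      (by positivity) hA.αs_nonneg hA.αs_le hA.αs_mono
      (hA.sq_norm_sub_le_inertial hσ0 hσ1 hτ hα1.le hη0 hη hzs) k
    convert this using 3
    ring
  have hsum : ∀ k, 0 ≤ ∑ j ∈ Icc 1 k, ‖z j - z (j - 1)‖ ^ 2 := fun k =>
    sum_nonneg fun _ _ => sq_nonneg _
  have hbound := le_div_one_sub_of_sub_mul_pred_le (φ := fun k => ‖z k - zs‖ ^ 2) hα0 hα1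
    (sq_nonneg _) fun k => by nlinarith [henergy k, mul_nonneg hq.le (hsum k)]
  refine ⟨hbound, fun k => ?_⟩
  have hprev : α * ‖z (k - 1) - zs‖ ^ 2 ≤ α * (‖z 0 - zs‖ ^ 2 / (1 - α)) :=
    mul_le_mul_of_nonneg_left (hbound (k - 1)) hα0
  have hsplit : ‖z 0 - zs‖ ^ 2 / (1 - α) = ‖z 0 - zs‖ ^ 2 + α * (‖z 0 - zs‖ ^ 2 / (1 - α)) := by
    field_simp [(sub_pos.2 hα1).ne']
    ring
  linarith [henergy k, sq_nonneg ‖z k - zs‖]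

theorem summable_sq_norm_sub (hA : IsInertialHPE T α σ τ z w ztil v ε lam αs)
    (hσ0 : 0 ≤ σ) (hσ1 : σ ≤ 1) (hτ : 0 < τ) (hα1 : α < 1) {η : ℝ}
    (hη : η ≤ 2 / ((1 + σ) * τ) - 1) (hq : 0 < η * (1 - α) ^ 2 - α * (1 + α)) {zs : H}
    (hzs : 0 ∈ T zs) : Summable fun k => ‖z (k + 1) - z k‖ ^ 2 := by
  refine summable_of_sum_range_le (fun _ => sq_nonneg _)
    (c := ‖z 0 - zs‖ ^ 2 / (1 - α) / (η * (1 - α) ^ 2 - α * (1 + α))) fun n => ?_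
  have hIcc : ∑ j ∈ Icc 1 n, ‖z j - z (j - 1)‖ ^ 2 = ∑ k ∈ range n, ‖z (k + 1) - z k‖ ^ 2 := by
    rw [range_eq_Ico]
    exact (sum_Ico_add' (fun j => ‖z j - z (j - 1)‖ ^ 2) 0 n 1).symm
  rw [le_div_iff₀ hq, mul_comm, ← hIcc]
  exact (hA.sq_norm_sub_le_and_sum_le hσ0 hσ1 hτ hα1 hη hq hzs).2 n

theorem exists_tendsto_sq_norm_sub (hA : IsInertialHPE T α σ τ z w ztil v ε lam αs)
    (hσ0 : 0 ≤ σ) (hσ1 : σ ≤ 1) (hτ : 0 < τ) (hα1 : α < 1) {η : ℝ}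
    (hη : η ≤ 2 / ((1 + σ) * τ) - 1) (hq : 0 < η * (1 - α) ^ 2 - α * (1 + α)) {zs : H}
    (hzs : 0 ∈ T zs) : ∃ r, Tendsto (fun k => ‖z k - zs‖ ^ 2) atTop (𝓝 r) := by
  have hα0 : 0 ≤ α := (hA.αs_nonneg 0).trans (hA.αs_le 0)
  have hη0 : 0 ≤ η := by nlinarith [sq_nonneg (1 - α), mul_nonneg hα0 (by linarith : 0 ≤ 1 + α)]
  set B := α * (1 + α) + η * α * (1 - α)
  have hB : 0 ≤ B := by positivity
  refine exists_tendsto_of_inertial_le hα1 ⟨0, by rintro _ ⟨k, rfl⟩; positivity⟩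
    (fun k => hA.αs_nonneg (k + 1)) (fun k => hA.αs_le (k + 1))
    (fun k => mul_nonneg hB (sq_nonneg ‖z (k + 1) - z k‖))
    ((hA.summable_sq_norm_sub hσ0 hσ1 hτ hα1 hη hq hzs).mul_left B) fun k => ?_
  have := hA.sq_norm_sub_le_inertial hσ0 hσ1 hτ hα1.le hη0 hη hzs (k + 1)
  simp only [Nat.add_sub_cancel] at this
  have : 0 ≤ η * (1 - α) * ‖z (k + 2) - z (k + 1)‖ ^ 2 := by
    have := sub_nonneg.2 hα1.le; positivity
  linarith

theorem lam_smul_v_eq (hA : IsInertialHPE T α σ τ z w ztil v ε lam αs) (hτ : τ ≠ 0) (k : ℕ) :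
    lam (k + 1) • v (k + 1) = τ⁻¹ • (w k - z (k + 1)) := by
  rw [hA.z_eq, sub_sub_cancel, mul_smul, inv_smul_smul₀ hτ]

theorem tendsto_sub_w (hA : IsInertialHPE T α σ τ z w ztil v ε lam αs)
    (hd : Tendsto (fun k => z (k + 1) - z k) atTop (𝓝 0)) :
    Tendsto (fun k => z (k + 1) - w k) atTop (𝓝 0) := by
  have hd' : Tendsto (fun k => z k - z (k - 1)) atTop (𝓝 0) := (tendsto_add_atTop_iff_nat 1).1 hd
  have hinertia : Tendsto (fun k => αs k • (z k - z (k - 1))) atTop (𝓝 0) := by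
    refine squeeze_zero_norm (fun k => ?_) (by simpa using hd'.norm.const_mul α)
    rw [norm_smul, Real.norm_of_nonneg (hA.αs_nonneg k)]
    exact mul_le_mul_of_nonneg_right (hA.αs_le k) (norm_nonneg _)
  simpa [hA.w_eq, sub_add_eq_sub_sub] using hd.sub hinertia

theorem tendsto_residuals (hA : IsInertialHPE T α σ τ z w ztil v ε lam αs) (hσ0 : 0 ≤ σ)
    (hσ1 : σ < 1) (hτ : 0 < τ) {lamlb : ℝ} (hlamlb : 0 < lamlb) (hlb : ∀ k, lamlb ≤ lam (k + 1))
    (hd : Tendsto (fun k => z (k + 1) - z k) atTop (𝓝 0)) :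
    Tendsto v atTop (𝓝 0) ∧ Tendsto ε atTop (𝓝 0) ∧
      Tendsto (fun k => ztil k - z k) atTop (𝓝 0) := by
  have hzw := hA.tendsto_sub_w hd
  have hlv : Tendsto (fun k => lam (k + 1) • v (k + 1)) atTop (𝓝 0) := by
    simpa [hA.lam_smul_v_eq hτ.ne'] using (hzw.neg.const_smul τ⁻¹)
  have hztw : Tendsto (fun k => ztil (k + 1) - w k) atTop (𝓝 0) := by
    refine squeeze_zero_norm (fun k => ?_) (by simpa using hlv.norm.div_const (1 - σ))
    rw [le_div_iff₀ (sub_pos.2 hσ1), mul_comm]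
    exact one_sub_mul_norm_le_of_hpe_error hσ0
      (mul_nonneg (hA.lam_pos k).le (hA.ε_nonneg k)) (hA.err_le k)
  refine ⟨(tendsto_add_atTop_iff_nat 1).1 ?_, (tendsto_add_atTop_iff_nat 1).1 ?_,
    (tendsto_add_atTop_iff_nat 1).1 ?_⟩
  · refine squeeze_zero_norm (fun k => ?_) (by simpa using hlv.norm.div_const lamlb)
    rw [le_div_iff₀ hlamlb, norm_smul, Real.norm_of_nonneg (hA.lam_pos k).le, mul_comm]
    exact mul_le_mul_of_nonneg_right (hlb k) (norm_nonneg _)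
  · -- the error criterion forces `2 λ ε ≤ σ² ‖z̃ - w‖²`
    refine squeeze_zero (fun k => hA.ε_nonneg k) (fun k => ?_)
      (by simpa using ((hztw.norm.pow 2).const_mul (σ ^ 2)).div_const (2 * lamlb))
    rw [le_div_iff₀ (by positivity)]
    nlinarith [hA.err_le k, hA.ε_nonneg k, hlb k,
      sq_nonneg ‖lam (k + 1) • v (k + 1) + ztil (k + 1) - w k‖]
  · simpa using hztw.sub hzw

theorem exists_weakTendsto [CompleteSpace H] (hA : IsInertialHPE T α σ τ z w ztil v ε lam αs)
    (hT : IsMaximalMonotoneOp T) (hσ0 : 0 ≤ σ) (hσ1 : σ < 1) (hτ : 0 < τ) (hα1 : α < 1)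
    {η : ℝ} (hη : η ≤ 2 / ((1 + σ) * τ) - 1) (hq : 0 < η * (1 - α) ^ 2 - α * (1 + α))
    (hzero : ∃ zs : H, 0 ∈ T zs) {lamlb : ℝ} (hlamlb : 0 < lamlb)
    (hlb : ∀ k, lamlb ≤ lam (k + 1)) : ∃ p, 0 ∈ T p ∧ WeakTendsto z atTop p := by
  obtain ⟨zs, hzs⟩ := hzero
  have hbdd : Bornology.IsBounded (Set.range z) := by
    refine (Metric.isBounded_closedBall (x := zs) (r := √(‖z 0 - zs‖ ^ 2 / (1 - α)))).subset
      (Set.range_subset_iff.2 fun k => ?_)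
    rw [Metric.mem_closedBall, dist_eq_norm]
    exact Real.le_sqrt_of_sq_le
      ((hA.sq_norm_sub_le_and_sum_le hσ0 hσ1.le hτ hα1 hη hq hzs).1 k)
  have hd : Tendsto (fun k => z (k + 1) - z k) atTop (𝓝 0) := by
    rw [tendsto_zero_iff_norm_tendsto_zero]
    simpa [Real.sqrt_sq (norm_nonneg _)] using
      ((hA.summable_sq_norm_sub hσ0 hσ1.le hτ hα1 hη hq hzs).tendsto_atTop_zero).sqrt
  obtain ⟨hv, hε, hztz⟩ := hA.tendsto_residuals hσ0 hσ1 hτ hlamlb hlb hd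
  obtain ⟨M, hM⟩ := isBounded_iff_forall_norm_le.1 hbdd
  have hztil : ∀ᶠ k in atTop, ‖ztil k‖ ≤ M + 1 := by
    filter_upwards [(tendsto_zero_iff_norm_tendsto_zero.1 hztz).eventually
      (gt_mem_nhds zero_lt_one)] with k hk
    linarith [norm_le_norm_add_norm_sub' (ztil k) (z k), hM _ ⟨k, rfl⟩]
  have hmem : ∀ᶠ k in atTop, v k ∈ enl T (ε k) (ztil k) :=
    eventually_atTop.2 ⟨1, fun k hk => Nat.sub_add_cancel hk ▸ hA.mem_enl (k - 1)⟩
  obtain ⟨p, hp, hzp⟩ := exists_weakTendsto_of_tendsto_sq_norm_sub (S := {p | 0 ∈ T p}) hbdd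
    (fun p hp => hA.exists_tendsto_sq_norm_sub hσ0 hσ1.le hτ hα1 hη hq hp)
    fun 𝒱 p h𝒱 hzp => hT.mem_of_weakTendsto (hzp.of_tendsto_sub (hztz.mono_left h𝒱))
      ((isBoundedUnder_of_eventually_le hztil).mono h𝒱) (hv.mono_left h𝒱) (hε.mono_left h𝒱)
      (hmem.filter_mono h𝒱)
  exact ⟨p, hp, hzp⟩

end IsInertialHPE

/-- Truncated subtraction makes `z (0 - 1) = z 0`, which encodes the paper's `z₋₁ = z₀`. -/
theorem stmt11_general
    {H : Type*} [NormedAddCommGroup H] [InnerProductSpace ℝ H] [CompleteSpace H]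
    (T : H → Set H) (hT : IsMaximalMonotoneOp T)
    (α σ τ : ℝ) (hα0 : 0 ≤ α) (hα1 : α < 1) (hσ0 : 0 ≤ σ) (hσ1 : σ < 1)
    (hτ0 : 0 < τ)
    (z w ztil v : ℕ → H) (ε lam αs : ℕ → ℝ)
    (hαs : ∀ k, 0 ≤ αs k ∧ αs k ≤ α)
    (hmono : ∀ k, αs k ≤ αs (k + 1))
    (hw : ∀ k, w k = z k + αs k • (z k - z (k - 1)))
    (hlam : ∀ k, 1 ≤ k → 0 < lam k)
    (hεnn : ∀ k, 1 ≤ k → 0 ≤ ε k)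
    (hin : ∀ k, 1 ≤ k → v k ∈ enl T (ε k) (ztil k))
    (herr : ∀ k, 1 ≤ k →
      ‖lam k • v k + ztil k - w (k - 1)‖ ^ 2 + 2 * lam k * ε k ≤
        σ ^ 2 * ‖ztil k - w (k - 1)‖ ^ 2)
    (hz : ∀ k, 1 ≤ k → z k = w (k - 1) - (τ * lam k) • v k)
    -- Assumption (A):
    (β β' : ℝ) (hαβ : α < β) (hβ1 : β < 1)
    (hβ' : β' = max β (2 * (1 - σ) / (3 - σ + Real.sqrt (9 + 2 * σ - 7 * σ ^ 2))))
    (hτA : τ = 2 * (β' - 1) ^ 2 / ((1 + σ) * (2 * (β' - 1) ^ 2 + 3 * β' - 1)))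
    (η : ℝ) (hη : η = 2 / ((1 + σ) * τ) - 1)
    (q : ℝ → ℝ) (hq : ∀ t, q t = (η - 1) * t ^ 2 - (1 + 2 * η) * t + η)
    (hzero : ∃ zs : H, (0 : H) ∈ T zs) :
    0 < q α ∧
    (∀ zs : H, (0 : H) ∈ T zs → ∀ k, 1 ≤ k →
      ∑ j ∈ Finset.Icc 1 k, ‖z j - z (j - 1)‖ ^ 2 ≤
        2 * ‖z 0 - zs‖ ^ 2 / ((1 - α) * q α)) ∧
    (∀ lamlb : ℝ, 0 < lamlb → (∀ k, 1 ≤ k → lamlb ≤ lam k) →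
      ∃ zinf : H, (0 : H) ∈ T zinf ∧
        ∀ y : H, Tendsto (fun k => ⟪z k, y⟫) atTop (𝓝 ⟪zinf, y⟫)) := by
  have hA : IsInertialHPE T α σ τ z w ztil v ε lam αs :=
    ⟨fun k => (hαs k).1, fun k => (hαs k).2, hmono, hw, fun k => hlam _ k.succ_pos,
      fun k => hεnn _ k.succ_pos, fun k => hin _ k.succ_pos, fun k => herr _ k.succ_pos,
      fun k => hz _ k.succ_pos⟩
  have hsqrt := Real.sqrt_nonneg (9 + 2 * σ - 7 * σ ^ 2)
  have hβ'1 : β' < 1 :=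
    hβ' ▸ max_lt hβ1 ((div_lt_one (by linarith)).2 (by linarith))
  have hαβ' : α < β' := hαβ.trans_le (hβ' ▸ le_max_left _ _)
  have hqα : q α = η * (1 - α) ^ 2 - α * (1 + α) := by rw [hq]; ring
  have hqpos : 0 < η * (1 - α) ^ 2 - α * (1 + α) := by
    rw [hη, eta_eq_of_tau_eq (by linarith) hβ'1.ne hτA]
    exact div_sq_mul_sub_pos hα0 hαβ' hβ'1
  rw [hqα]
  refine ⟨hqpos, fun zs hzs k _ => ?_, fun lamlb hlamlb hlb =>
    hA.exists_weakTendsto hT hσ0 hσ1 hτ0 hα1 hη.le hqpos hzero hlamlb fun k => hlb _ k.succ_pos⟩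
  have hsum := (hA.sq_norm_sub_le_and_sum_le hσ0 hσ1.le hτ0 hα1 hη.le hqpos hzs).2 k
  rw [le_div_iff₀ (sub_pos.2 hα1)] at hsum
  rw [le_div_iff₀ (by positivity)]
  nlinarith [sq_nonneg ‖z 0 - zs‖]

/-- second weak-convergence result for Algorithm 1 under Assumption (A).
Indexing convention: `z k` is the paper's `z_k` for `k ≥ 0`, the paper's `z_{−1} = z₀` being
encoded by truncated subtraction; weak convergence is expressed via inner products. -/
theorem stmt11
    {H : Type*} [NormedAddCommGroup H] [InnerProductSpace ℝ H] [CompleteSpace H]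
    (T : H → Set H) (hT : IsMaximalMonotoneOp T)
    (α σ τ : ℝ) (hα0 : 0 ≤ α) (hα1 : α < 1) (hσ0 : 0 ≤ σ) (hσ1 : σ < 1)
    (hτ0 : 0 < τ) (hτ1 : τ ≤ 1)
    (z w ztil v : ℕ → H) (ε lam αs : ℕ → ℝ)
    (hαs : ∀ k, 0 ≤ αs k ∧ αs k ≤ α)
    (hmono : ∀ k, αs k ≤ αs (k + 1))
    (hw : ∀ k, w k = z k + αs k • (z k - z (k - 1)))
    (hlam : ∀ k, 1 ≤ k → 0 < lam k)
    (hεnn : ∀ k, 1 ≤ k → 0 ≤ ε k)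
    (hin : ∀ k, 1 ≤ k → v k ∈ enl T (ε k) (ztil k))
    (herr : ∀ k, 1 ≤ k →
      ‖lam k • v k + ztil k - w (k - 1)‖ ^ 2 + 2 * lam k * ε k ≤
        σ ^ 2 * ‖ztil k - w (k - 1)‖ ^ 2)
    (hz : ∀ k, 1 ≤ k → z k = w (k - 1) - (τ * lam k) • v k)
    -- Assumption (A):
    (β β' : ℝ) (hαβ : α < β) (hβ1 : β < 1)
    (hβ' : β' = max β (2 * (1 - σ) / (3 - σ + Real.sqrt (9 + 2 * σ - 7 * σ ^ 2))))
    (hτA : τ = 2 * (β' - 1) ^ 2 / ((1 + σ) * (2 * (β' - 1) ^ 2 + 3 * β' - 1)))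
    (η : ℝ) (hη : η = 2 / ((1 + σ) * τ) - 1)
    (q : ℝ → ℝ) (hq : ∀ t, q t = (η - 1) * t ^ 2 - (1 + 2 * η) * t + η)
    (hzero : ∃ zs : H, (0 : H) ∈ T zs) :
    0 < q α ∧
    (∀ zs : H, (0 : H) ∈ T zs → ∀ k, 1 ≤ k →
      ∑ j ∈ Finset.Icc 1 k, ‖z j - z (j - 1)‖ ^ 2 ≤
        2 * ‖z 0 - zs‖ ^ 2 / ((1 - α) * q α)) ∧
    (∀ lamlb : ℝ, 0 < lamlb → (∀ k, 1 ≤ k → lamlb ≤ lam k) →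
      ∃ zinf : H, (0 : H) ∈ T zinf ∧
        ∀ y : H, Tendsto (fun k => ⟪z k, y⟫) atTop (𝓝 ⟪zinf, y⟫)) :=
  stmt11_general T hT α σ τ hα0 hα1 hσ0 hσ1 hτ0 z w ztil v ε lam αs hαs hmono hw hlam hεnn hin herr
    hz β β' hαβ hβ1 hβ' hτA η hη q hq hzero
end

section
/- Let H be a real Hilbert space, Ω ⊆ H a nonempty closed convex set, F : H → H monotone and L-Lipschitz continuous on Ω, and B : H ⇒ H maximal monotone with domain contained in Ω. Let {z_k}, {w_k}, {w'_k}, {z̃_k}, {ẑ_k}, {λ_k}, {α_k} be generated by Algorithm 3 (inertial under-relaxed Tseng's modified forward-backward method) with parameters α ∈ [0,1), σ ∈ (0,1), τ ∈ (0,1], and define ε_k := 0 and v_k := F(z̃_k) − F(w'_{k−1}) + (w_{k−1} − z̃_k)/λ_k for k ≥ 1. Then for all k ≥ 1: v_k ∈ F(z̃_k) + B(z̃_k), ‖λ_k v_k + z̃_k − w_{k−1}‖² ≤ σ²‖z̃_k − w_{k−1}‖², and z_k = w_{k−1} − τλ_k v_k; i.e., Algorithm 3 is a special instance of Algorithm 1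 (inertial under-relaxed HPE) applied to T := F + B. -/
/-! Write `u = w_{k-1}`, `p = w'_{k-1}`, `x = z̃_k`. The resolvent step says exactly that
`v_k - F x ∈ B x`, and `λ_k v_k + x - u = λ_k (F x - F p)`. Since `x ∈ dom B ⊆ Ω` and `p` is the
projection of `u` onto the convex set `Ω`, `‖x - p‖ ≤ ‖x - u‖`, so the Lipschitz bound together
with `λ_k L ≤ σ` gives the HPE error criterion. The relaxation step is pure algebra. -/

open Filter Finset Topology Pointwise
open scoped RealInnerProductSpace

section

variable {H : Type*} [NormedAddCommGroup H] [InnerProductSpace ℝ H]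

theorem Convex.norm_sub_le_of_forall_norm_sub_le {Ω : Set H} (hΩ : Convex ℝ Ω) {u p x : H}
    (hp : p ∈ Ω) (hnear : ∀ y ∈ Ω, ‖p - u‖ ≤ ‖y - u‖) (hx : x ∈ Ω) :
    ‖x - p‖ ≤ ‖x - u‖ := by
  have hleast : IsLeast (Set.range fun y : Ω ↦ ‖u - y‖) ‖u - p‖ := by
    refine ⟨⟨⟨p, hp⟩, rfl⟩, ?_⟩
    rintro _ ⟨y, rfl⟩
    simpa only [norm_sub_rev u] using hnear y y.2
  have hinf : ‖u - p‖ = ⨅ y : Ω, ‖u - y‖ := hleast.csInf_eq.symm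
  have hobtuse : ⟪u - p, x - p⟫ ≤ 0 :=
    (norm_eq_iInf_iff_real_inner_le_zero hΩ hp).mp hinf x hx
  have hexpand : ‖x - u‖ ^ 2 = ‖x - p‖ ^ 2 - 2 * ⟪x - p, u - p⟫ + ‖u - p‖ ^ 2 := by
    rw [← norm_sub_sq_real, sub_sub_sub_cancel_right]
  rw [real_inner_comm] at hobtuse
  refine pow_le_pow_iff_left₀ (norm_nonneg _) (norm_nonneg _) two_ne_zero |>.mp ?_
  linarith [sq_nonneg ‖u - p‖]

theorem inv_smul_sub_sub_mem_of_sub_smul_sub_mem_smul {S : Set H} {t : ℝ} (ht : t ≠ 0)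
    {u a x : H} (h : u - t • a - x ∈ t • S) : t⁻¹ • (u - x) - a ∈ S := by
  rw [Set.mem_smul_set_iff_inv_smul_mem₀ ht, smul_sub, smul_sub, inv_smul_smul₀ ht] at h
  convert h using 1
  rw [smul_sub]
  abel

theorem norm_smul_add_inv_smul_sub_sq_le {t L σ : ℝ} (ht : 0 < t) (hL : 0 ≤ L) (htL : t * L ≤ σ)
    {d u x p : H} (hd : ‖d‖ ≤ L * ‖x - p‖) (hxp : ‖x - p‖ ≤ ‖x - u‖) :
    ‖t • (d + t⁻¹ • (u - x)) + x - u‖ ^ 2 ≤ σ ^ 2 * ‖x - u‖ ^ 2 := by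
  have hσ : 0 ≤ σ := (mul_nonneg ht.le hL).trans htL
  have hcancel : t • (d + t⁻¹ • (u - x)) + x - u = t • d := by
    rw [smul_add, smul_inv_smul₀ ht.ne']
    abel
  rw [hcancel, ← mul_pow]
  gcongr
  calc ‖t • d‖ = t * ‖d‖ := by rw [norm_smul, Real.norm_of_nonneg ht.le]
    _ ≤ t * (L * ‖x - p‖) := by gcongr
    _ = (t * L) * ‖x - p‖ := by ring
    _ ≤ σ * ‖x - p‖ := by gcongr
    _ ≤ σ * ‖x - u‖ := by gcongr

end

theorem stmt17_general
    {H : Type*} [NormedAddCommGroup H] [InnerProductSpace ℝ H]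
    (Ω : Set H) (hΩcv : Convex ℝ Ω)
    (F : H → H) (L : ℝ) (hL : 0 < L)
    (hFlip : ∀ x ∈ Ω, ∀ y ∈ Ω, ‖F x - F y‖ ≤ L * ‖x - y‖)
    (B : H → Set H)
    (hdom : ∀ x : H, (B x).Nonempty → x ∈ Ω)
    (σ τ : ℝ)
    (z w w' ztil zhat v : ℕ → H) (lam : ℕ → ℝ)
    (hlam : ∀ k, 1 ≤ k → 0 < lam k ∧ lam k ≤ σ / L)
    (hproj : ∀ k, w' k ∈ Ω ∧ ∀ u ∈ Ω, ‖w' k - w k‖ ≤ ‖u - w k‖)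
    (hres : ∀ k, 1 ≤ k →
      w (k - 1) - lam k • F (w' (k - 1)) - ztil k ∈ lam k • B (ztil k))
    (hzhat : ∀ k, 1 ≤ k → zhat k = ztil k - lam k • (F (ztil k) - F (w' (k - 1))))
    (hz : ∀ k, 1 ≤ k → z k = (1 - τ) • w (k - 1) + τ • zhat k)
    (hv : ∀ k, 1 ≤ k →
      v k = F (ztil k) - F (w' (k - 1)) + (lam k)⁻¹ • (w (k - 1) - ztil k)) :
    ∀ k, 1 ≤ k →
      v k - F (ztil k) ∈ B (ztil k) ∧
      ‖lam k • v k + ztil k - w (k - 1)‖ ^ 2 ≤ σ ^ 2 * ‖ztil k - w (k - 1)‖ ^ 2 ∧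
      z k = w (k - 1) - (τ * lam k) • v k := by
  intro k hk
  obtain ⟨hlam0, hlamσ⟩ := hlam k hk
  obtain ⟨hw'Ω, hnear⟩ := hproj (k - 1)
  have hB : v k - F (ztil k) ∈ B (ztil k) := by
    convert inv_smul_sub_sub_mem_of_sub_smul_sub_mem_smul hlam0.ne' (hres k hk) using 1
    rw [hv k hk]
    abel
  have hztilΩ : ztil k ∈ Ω := hdom _ ⟨_, hB⟩
  refine ⟨hB, ?_, ?_⟩
  · rw [hv k hk]
    exact norm_smul_add_inv_smul_sub_sq_le hlam0 hL.le ((le_div_iff₀ hL).mp hlamσ)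
      (hFlip _ hztilΩ _ hw'Ω) (hΩcv.norm_sub_le_of_forall_norm_sub_le hw'Ω hnear hztilΩ)
  · rw [hz k hk, hzhat k hk, hv k hk, mul_smul, smul_add, smul_inv_smul₀ hlam0.ne']
    module

/-- Algorithm 3 (inertial under-relaxed Tseng's modified forward-backward
method) is a special instance of Algorithm 1 applied to `T := F + B`.  Indexing convention:
`z k` is the paper's `z_k` for `k ≥ 0`, the paper's `z_{−1} = z₀` being encoded by truncated
subtraction.  The projection `w' = P_Ω(w)` is encoded as the closest point of `Ω` to `w`, and
the resolvent step `z̃_k = (λ_k B + I)⁻¹(u)` as `u − z̃_k ∈ λ_k B(z̃_k)`. -/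
theorem stmt17
    {H : Type*} [NormedAddCommGroup H] [InnerProductSpace ℝ H] [CompleteSpace H]
    (Ω : Set H) (hΩne : Ω.Nonempty) (hΩcl : IsClosed Ω) (hΩcv : Convex ℝ Ω)
    (F : H → H) (L : ℝ) (hL : 0 < L)
    (hFmono : ∀ x ∈ Ω, ∀ y ∈ Ω, 0 ≤ ⟪x - y, F x - F y⟫)
    (hFlip : ∀ x ∈ Ω, ∀ y ∈ Ω, ‖F x - F y‖ ≤ L * ‖x - y‖)
    (B : H → Set H) (hB : IsMaximalMonotoneOp B)
    (hdom : ∀ x : H, (B x).Nonempty → x ∈ Ω)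
    (α σ τ : ℝ) (hα0 : 0 ≤ α) (hα1 : α < 1) (hσ0 : 0 < σ) (hσ1 : σ < 1)
    (hτ0 : 0 < τ) (hτ1 : τ ≤ 1)
    (z w w' ztil zhat v : ℕ → H) (lam αs : ℕ → ℝ)
    (hαs : ∀ k, 0 ≤ αs k ∧ αs k ≤ α)
    (hw : ∀ k, w k = z k + αs k • (z k - z (k - 1)))
    (hlam : ∀ k, 1 ≤ k → 0 < lam k ∧ lam k ≤ σ / L)
    (hproj : ∀ k, w' k ∈ Ω ∧ ∀ u ∈ Ω, ‖w' k - w k‖ ≤ ‖u - w k‖)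
    (hres : ∀ k, 1 ≤ k →
      w (k - 1) - lam k • F (w' (k - 1)) - ztil k ∈ lam k • B (ztil k))
    (hzhat : ∀ k, 1 ≤ k → zhat k = ztil k - lam k • (F (ztil k) - F (w' (k - 1))))
    (hz : ∀ k, 1 ≤ k → z k = (1 - τ) • w (k - 1) + τ • zhat k)
    (hv : ∀ k, 1 ≤ k →
      v k = F (ztil k) - F (w' (k - 1)) + (lam k)⁻¹ • (w (k - 1) - ztil k)) :
    ∀ k, 1 ≤ k →
      v k - F (ztil k) ∈ B (ztil k) ∧
      ‖lam k • v k + ztil k - w (k - 1)‖ ^ 2 ≤ σ ^ 2 * ‖ztil k - w (k - 1)‖ ^ 2 ∧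
      z k = w (k - 1) - (τ * lam k) • v k :=
  stmt17_general Ω hΩcv F L hL hFlip B hdom σ τ z w w' ztil zhat v lam hlam hproj hres hzhat hz hv
end
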